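/- arXiv:1312.6714 — 4 statements merged into one kernel-verified Lean document; each statement's English description precedes it below -/
import Mathlib

section
/- Let n ≥ 1 and p ≥ 0 be integers and let Ω₋ and Ω₊ be nonempty bounded open subsets of ℝⁿ. Then there exists a constant C > 0 (depending only on n, p, Ω₋, Ω₊) such that for every family of real numbers Δ = (Δ_α) indexed by the multi-indices α ∈ ℕⁿ with |α| ≤ p, and every real polynomial v in n variables of total degree at most p, one has ∫_{Ω₋} ( v(ξ) + (1/2) Σ_{|α|≤p} (Δ_α/α!) ξ^α )² dξ + ∫_{Ω₊} ( v(ξ) − (1/2) Σ_{|α|≤p} (Δ_α/α!) ξ^α )² dξ ≥ C Σ_{|α|≤p} Δ_α². In particular, the minimum of the left-hand side over all such polynomials v is a positive definite quadratic form in Δ. -/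
/-!
Both integrals depend only on the finitely many coefficients of `Δ` and `v`, and their sum is a
continuous function of this coefficient vector, homogeneous of degree 2. It vanishes only at the
origin: a polynomial whose square integrates to zero over a nonempty open set is zero, so
`v + Δ/2` and `v - Δ/2` both vanish, which forces `Δ = v = 0`. Comparing with `∑ Δ_α²` on the
compact unit sphere gives the constant.
-/

open MeasureTheory

noncomputable section

/-- The finset of multi-indices `α : Fin n → ℕ` (encoded with components in `Fin (p+1)`)
of total degree `|α| ≤ p`. -/
def multiIndices (n p : ℕ) : Finset (Fin n → Fin (p + 1)) :=
  Finset.univ.filter (fun α => ∑ i, (α i : ℕ) ≤ p)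

/-- The polynomial-like function `ξ ↦ ∑_{|α| ≤ p} (Δ_α / α!) ξ^α`. -/
def deltaPoly (n p : ℕ) (Δ : (Fin n → Fin (p + 1)) → ℝ) (ξ : Fin n → ℝ) : ℝ :=
  ∑ α ∈ multiIndices n p,
    (Δ α / ∏ i, (Nat.factorial (α i) : ℝ)) * ∏ i, ξ i ^ (α i : ℕ)

open MvPolynomial

theorem exists_pos_mul_le_of_sq_homogeneous {E : Type*} [NormedAddCommGroup E]
    [NormedSpace ℝ E] [FiniteDimensional ℝ E] {F G : E → ℝ} (hF : Continuous F)
    (hG : Continuous G) (hF_smul : ∀ (t : ℝ) x, F (t • x) = t ^ 2 * F x)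
    (hG_smul : ∀ (t : ℝ) x, G (t • x) = t ^ 2 * G x) (hF_pos : ∀ x, x ≠ 0 → 0 < F x) :
    ∃ C, 0 < C ∧ ∀ x, C * G x ≤ F x := by
  rcases subsingleton_or_nontrivial E with hE | hE
  · refine ⟨1, one_pos, fun x => ?_⟩
    rw [Subsingleton.elim x 0, ← zero_smul ℝ (0 : E), hF_smul, hG_smul]
    simp
  have hS : (Metric.sphere (0 : E) 1).Nonempty := NormedSpace.sphere_nonempty.mpr zero_le_one
  obtain ⟨u₀, hu₀, hmin⟩ := (isCompact_sphere (0 : E) 1).exists_isMinOn hS hF.continuousOn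
  obtain ⟨u₁, -, hmax⟩ := (isCompact_sphere (0 : E) 1).exists_isMaxOn hS hG.continuousOn
  have hc : 0 < F u₀ := hF_pos u₀ (ne_zero_of_mem_sphere one_ne_zero ⟨u₀, hu₀⟩)
  have hM : 0 < max (G u₁) 1 := lt_max_of_lt_right one_pos
  have hpolar : ∀ x : E, ∃ u ∈ Metric.sphere (0 : E) 1, x = ‖x‖ • u := by
    intro x
    rcases eq_or_ne x 0 with rfl | hx
    · exact ⟨u₀, hu₀, by simp⟩
    · refine ⟨‖x‖⁻¹ • x, by simp [norm_smul, hx], ?_⟩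
      rw [smul_smul, mul_inv_cancel₀ (norm_ne_zero_iff.mpr hx), one_smul]
  refine ⟨F u₀ / max (G u₁) 1, by positivity, fun x => ?_⟩
  obtain ⟨u, hu, hxu⟩ := hpolar x
  have hGu : F u₀ / max (G u₁) 1 * G u ≤ F u :=
    calc F u₀ / max (G u₁) 1 * G u ≤ F u₀ / max (G u₁) 1 * max (G u₁) 1 := by
          gcongr
          exact (hmax hu).trans (le_max_left _ _)
      _ = F u₀ := div_mul_cancel₀ _ hM.ne'
      _ ≤ F u := hmin hu
  rw [hxu, hF_smul, hG_smul, mul_left_comm]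
  exact mul_le_mul_of_nonneg_left hGu (sq_nonneg _)

theorem MvPolynomial.eq_zero_of_eval_eq_zero_of_isOpen {σ : Type*} [Fintype σ]
    {q : MvPolynomial σ ℝ} {U : Set (σ → ℝ)} (hU : IsOpen U) (hne : U.Nonempty)
    (h : ∀ ξ ∈ U, eval ξ q = 0) : q = 0 := by
  obtain ⟨ξ₀, hξ₀⟩ := hne
  obtain ⟨ε, hε, hball⟩ := Metric.isOpen_iff.mp hU ξ₀ hξ₀
  refine funext_set (fun i => Metric.ball (ξ₀ i) ε) (fun i => ?_) fun ξ hξ => ?_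
  · rw [Real.ball_eq_Ioo]
    exact Set.Ioo_infinite (by linarith)
  · rw [map_zero]
    exact h ξ (hball (by rwa [ball_pi _ hε]))

theorem eqOn_zero_of_setIntegral_sq_eq_zero {X : Type*} [TopologicalSpace X]
    [MeasurableSpace X] [OpensMeasurableSpace X] {μ : Measure X} [μ.IsOpenPosMeasure]
    {f : X → ℝ} (hf : Continuous f) {U : Set X} (hU : IsOpen U)
    (hint : IntegrableOn (fun x => f x ^ 2) U μ) (h : ∫ x in U, f x ^ 2 ∂μ = 0) :
    Set.EqOn f 0 U := by
  have hae := (integral_eq_zero_iff_of_nonneg (fun x => sq_nonneg (f x)) hint).mp h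
  have hsq : Set.EqOn (fun x => f x ^ 2) 0 U :=
    Measure.eqOn_open_of_ae_eq hae hU (hf.pow 2).continuousOn continuousOn_const
  exact fun x hx => pow_eq_zero_iff two_ne_zero |>.mp (hsq hx)

theorem continuous_setIntegral_of_isBounded {X Y : Type*} [TopologicalSpace X]
    [FirstCountableTopology X] [LocallyCompactSpace X] [PseudoMetricSpace Y] [ProperSpace Y]
    [SecondCountableTopology Y] [MeasurableSpace Y] [OpensMeasurableSpace Y] {μ : Measure Y}
    [IsLocallyFiniteMeasure μ] {f : X → Y → ℝ} (hf : Continuous (Function.uncurry f))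
    {s : Set Y} (hs : Bornology.IsBounded s) : Continuous fun x => ∫ y in s, f x y ∂μ := by
  have := continuous_parametric_integral_of_continuous (μ := μ.restrict s) hf
    hs.isCompact_closure
  rwa [Measure.restrict_restrict isClosed_closure.measurableSet,
    Set.inter_eq_right.mpr subset_closure] at this

section Coefficients

variable {n p : ℕ}

def multiIndexToFinsupp (α : Fin n → Fin (p + 1)) : Fin n →₀ ℕ :=
  Finsupp.equivFunOnFinite.symm fun i => α i

@[simp]
theorem multiIndexToFinsupp_apply (α : Fin n → Fin (p + 1)) (i : Fin n) :
    multiIndexToFinsupp α i = α i := rfl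

theorem multiIndexToFinsupp_injective :
    Function.Injective (multiIndexToFinsupp : (Fin n → Fin (p + 1)) → Fin n →₀ ℕ) :=
  fun _ _ h => funext fun i => Fin.ext (DFunLike.congr_fun h i)

def multiIndexFactorial (α : Fin n → Fin (p + 1)) : ℝ :=
  ∏ i, ((α i : ℕ).factorial : ℝ)

theorem multiIndexFactorial_ne_zero (α : Fin n → Fin (p + 1)) : multiIndexFactorial α ≠ 0 :=
  Finset.prod_ne_zero_iff.mpr fun i _ => by positivity

variable (n p) in
def polyOfCoeffs : (multiIndices n p → ℝ) →ₗ[ℝ] MvPolynomial (Fin n) ℝ :=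
  Fintype.linearCombination ℝ fun α => monomial (multiIndexToFinsupp α.1) 1

theorem eval_polyOfCoeffs (b : multiIndices n p → ℝ) (ξ : Fin n → ℝ) :
    eval ξ (polyOfCoeffs n p b) = ∑ α, b α * ∏ i, ξ i ^ (α.1 i : ℕ) := by
  simp only [polyOfCoeffs, Fintype.linearCombination_apply, map_sum, smul_eval, eval_monomial,
    Finsupp.prod_fintype _ _ (fun _ => pow_zero _), one_mul, multiIndexToFinsupp_apply]

theorem polyOfCoeffs_injective : Function.Injective (polyOfCoeffs n p) := by
  have := (basisMonomials (Fin n) ℝ).linearIndependent.comp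
    (fun α : multiIndices n p => multiIndexToFinsupp α.1)
    (multiIndexToFinsupp_injective.comp Subtype.val_injective)
  rw [coe_basisMonomials] at this
  exact this.fintypeLinearCombination_injective

theorem exists_mem_multiIndices_toFinsupp_eq {d : Fin n →₀ ℕ} (hd : ∑ i, d i ≤ p) :
    ∃ α ∈ multiIndices n p, multiIndexToFinsupp α = d := by
  have hlt : ∀ i, d i < p + 1 := fun i =>
    Nat.lt_succ_of_le ((Finset.single_le_sum (by simp) (Finset.mem_univ i)).trans hd)
  exact ⟨fun i => ⟨d i, hlt i⟩, by simpa [multiIndices] using hd, Finsupp.ext fun i => rfl⟩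

theorem exists_polyOfCoeffs_eq {v : MvPolynomial (Fin n) ℝ} (hv : v.totalDegree ≤ p) :
    ∃ b, polyOfCoeffs n p b = v := by
  rw [← LinearMap.mem_range, polyOfCoeffs, Fintype.range_linearCombination, v.as_sum]
  refine Submodule.sum_mem _ fun d hd => ?_
  obtain ⟨α, hα, rfl⟩ := exists_mem_multiIndices_toFinsupp_eq (p := p)
    (by simpa [Finsupp.sum_fintype] using (le_totalDegree hd).trans hv)
  rw [← mul_one (coeff _ v), ← smul_eq_mul, ← smul_monomial]
  exact Submodule.smul_mem _ _ (Submodule.subset_span ⟨⟨α, hα⟩, rfl⟩)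

theorem deltaPoly_eq_eval_polyOfCoeffs (Δ : (Fin n → Fin (p + 1)) → ℝ) (ξ : Fin n → ℝ) :
    deltaPoly n p Δ ξ =
      eval ξ (polyOfCoeffs n p fun α => Δ α / multiIndexFactorial α.1) := by
  rw [eval_polyOfCoeffs, deltaPoly, ← Finset.sum_coe_sort]
  rfl

end Coefficients

section SquareIntegral

variable {n : ℕ} (p : ℕ) (Ω : Set (Fin n → ℝ))

def sqIntegral (b : multiIndices n p → ℝ) : ℝ :=
  ∫ ξ in Ω, eval ξ (polyOfCoeffs n p b) ^ 2

theorem sqIntegral_nonneg (b : multiIndices n p → ℝ) : 0 ≤ sqIntegral p Ω b :=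
  integral_nonneg fun _ => sq_nonneg _

theorem sqIntegral_smul (t : ℝ) (b : multiIndices n p → ℝ) :
    sqIntegral p Ω (t • b) = t ^ 2 * sqIntegral p Ω b := by
  simp only [sqIntegral, map_smul, smul_eval, mul_pow, integral_const_mul]

variable {p Ω}

theorem continuous_sqIntegral (hΩ : Bornology.IsBounded Ω) : Continuous (sqIntegral p Ω) :=
  continuous_setIntegral_of_isBounded (by simp only [eval_polyOfCoeffs]; fun_prop) hΩ

theorem sqIntegral_pos (hO : IsOpen Ω) (hΩ : Bornology.IsBounded Ω) (hne : Ω.Nonempty)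
    {b : multiIndices n p → ℝ} (hb : b ≠ 0) : 0 < sqIntegral p Ω b := by
  refine (sqIntegral_nonneg p Ω b).lt_of_ne' fun h => hb (polyOfCoeffs_injective ?_)
  have hint : IntegrableOn (fun ξ => eval ξ (polyOfCoeffs n p b) ^ 2) Ω :=
    (((continuous_eval _).pow 2).continuousOn.integrableOn_compact hΩ.isCompact_closure).mono_set
      subset_closure
  rw [map_zero]
  exact eq_zero_of_eval_eq_zero_of_isOpen hO hne
    (eqOn_zero_of_setIntegral_sq_eq_zero (continuous_eval _) hO hint h)

end SquareIntegral

section JumpEnergy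

variable {n : ℕ} (p : ℕ) {Ωm Ωp : Set (Fin n → ℝ)}

variable (Ωm Ωp) in
/-- `x.1` holds the coefficients `Δ_α / α!` of the jump and `x.2` those of `v`. -/
def jumpEnergy (x : (multiIndices n p → ℝ) × (multiIndices n p → ℝ)) : ℝ :=
  sqIntegral p Ωm (x.2 + (1 / 2 : ℝ) • x.1) + sqIntegral p Ωp (x.2 - (1 / 2 : ℝ) • x.1)

theorem jumpEnergy_smul (t : ℝ) (x : (multiIndices n p → ℝ) × (multiIndices n p → ℝ)) :
    jumpEnergy p Ωm Ωp (t • x) = t ^ 2 * jumpEnergy p Ωm Ωp x := by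
  simp only [jumpEnergy, Prod.smul_fst, Prod.smul_snd, smul_comm (1 / 2 : ℝ) t, ← smul_add,
    ← smul_sub, sqIntegral_smul, mul_add]

theorem continuous_jumpEnergy (hbm : Bornology.IsBounded Ωm) (hbp : Bornology.IsBounded Ωp) :
    Continuous (jumpEnergy p Ωm Ωp) :=
  ((continuous_sqIntegral hbm).comp (by fun_prop)).add
    ((continuous_sqIntegral hbp).comp (by fun_prop))

theorem jumpEnergy_pos (hOm : IsOpen Ωm) (hOp : IsOpen Ωp) (hbm : Bornology.IsBounded Ωm)
    (hbp : Bornology.IsBounded Ωp) (hnem : Ωm.Nonempty) (hnep : Ωp.Nonempty)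
    {x : (multiIndices n p → ℝ) × (multiIndices n p → ℝ)} (hx : x ≠ 0) :
    0 < jumpEnergy p Ωm Ωp x := by
  obtain ⟨a, b⟩ := x
  by_cases hm : b + (1 / 2 : ℝ) • a = 0
  · refine add_pos_of_nonneg_of_pos (sqIntegral_nonneg ..)
      (sqIntegral_pos hOp hbp hnep fun hp => hx ?_)
    have ha : a = (b + (1 / 2 : ℝ) • a) - (b - (1 / 2 : ℝ) • a) := by module
    have hb : b = (1 / 2 : ℝ) • ((b + (1 / 2 : ℝ) • a) + (b - (1 / 2 : ℝ) • a)) := by module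
    rw [hm, hp, sub_zero] at ha
    rw [hm, hp, add_zero, smul_zero] at hb
    rw [ha, hb, Prod.mk_zero_zero]
  · exact add_pos_of_pos_of_nonneg (sqIntegral_pos hOm hbm hnem hm) (sqIntegral_nonneg ..)

theorem jumpEnergy_taylorCoeffs (Δ : (Fin n → Fin (p + 1)) → ℝ) (b : multiIndices n p → ℝ) :
    jumpEnergy p Ωm Ωp (fun α => Δ α / multiIndexFactorial α.1, b) =
      (∫ ξ in Ωm, (eval ξ (polyOfCoeffs n p b) + (1 / 2) * deltaPoly n p Δ ξ) ^ 2) +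
        ∫ ξ in Ωp, (eval ξ (polyOfCoeffs n p b) - (1 / 2) * deltaPoly n p Δ ξ) ^ 2 := by
  simp only [jumpEnergy, sqIntegral, map_add, map_sub, map_smul, smul_eval,
    deltaPoly_eq_eval_polyOfCoeffs]

end JumpEnergy

theorem quadratic_form_positive_definite_general (n p : ℕ)
    (Ωm Ωp : Set (Fin n → ℝ))
    (hOm : IsOpen Ωm) (hOp : IsOpen Ωp)
    (hbm : Bornology.IsBounded Ωm) (hbp : Bornology.IsBounded Ωp)
    (hnem : Ωm.Nonempty) (hnep : Ωp.Nonempty) :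
    ∃ C : ℝ, 0 < C ∧
      ∀ (Δ : (Fin n → Fin (p + 1)) → ℝ) (v : MvPolynomial (Fin n) ℝ),
        v.totalDegree ≤ p →
        (∫ ξ in Ωm, (MvPolynomial.eval ξ v + (1 / 2) * deltaPoly n p Δ ξ) ^ 2)
          + (∫ ξ in Ωp, (MvPolynomial.eval ξ v - (1 / 2) * deltaPoly n p Δ ξ) ^ 2) ≥
        C * ∑ α ∈ multiIndices n p, (Δ α) ^ 2 := by
  obtain ⟨C, hC, hCE⟩ := exists_pos_mul_le_of_sq_homogeneous
    (continuous_jumpEnergy p hbm hbp)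
    (G := fun x => ∑ α, (x.1 α * multiIndexFactorial α.1) ^ 2) (by fun_prop)
    (jumpEnergy_smul p)
    (fun t x => by
      simp only [Prod.smul_fst, Pi.smul_apply, smul_eq_mul, mul_assoc, mul_pow, Finset.mul_sum])
    (fun x => jumpEnergy_pos p hOm hOp hbm hbp hnem hnep)
  refine ⟨C, hC, fun Δ v hv => ?_⟩
  obtain ⟨b, rfl⟩ := exists_polyOfCoeffs_eq hv
  have hG : ∑ α ∈ multiIndices n p, Δ α ^ 2 = ∑ α : multiIndices n p,
      ((Δ α / multiIndexFactorial α.1) * multiIndexFactorial α.1) ^ 2 := by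
    rw [← Finset.sum_coe_sort (multiIndices n p)]
    exact Finset.sum_congr rfl fun α _ => by
      rw [div_mul_cancel₀ _ (multiIndexFactorial_ne_zero _)]
  rw [ge_iff_le, ← jumpEnergy_taylorCoeffs, hG]
  exact hCE (fun α => Δ α / multiIndexFactorial α.1, b)

/-- Lemma 2.1: the quadratic form `Q(Δ)` obtained by minimizing over polynomials `v` of total
degree `≤ p` is positive definite; equivalently, the functional is bounded below by
`C ‖Δ‖²` uniformly in `v`. -/
theorem quadratic_form_positive_definite (n p : ℕ) (hn : 1 ≤ n)
    (Ωm Ωp : Set (Fin n → ℝ))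
    (hOm : IsOpen Ωm) (hOp : IsOpen Ωp)
    (hbm : Bornology.IsBounded Ωm) (hbp : Bornology.IsBounded Ωp)
    (hnem : Ωm.Nonempty) (hnep : Ωp.Nonempty) :
    ∃ C : ℝ, 0 < C ∧
      ∀ (Δ : (Fin n → Fin (p + 1)) → ℝ) (v : MvPolynomial (Fin n) ℝ),
        v.totalDegree ≤ p →
        (∫ ξ in Ωm, (MvPolynomial.eval ξ v + (1 / 2) * deltaPoly n p Δ ξ) ^ 2)
          + (∫ ξ in Ωp, (MvPolynomial.eval ξ v - (1 / 2) * deltaPoly n p Δ ξ) ^ 2) ≥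
        C * ∑ α ∈ multiIndices n p, (Δ α) ^ 2 :=
  quadratic_form_positive_definite_general n p Ωm Ωp hOm hOp hbm hbp hnem hnep
end
end

section
/- There exists a constant C > 0 depending only on p such that for every partition of [a,b], every piecewise polynomial u^R = (P₀,…,P_N) of degree ≤ p with respect to it, and every function u that is (p+1)-times continuously differentiable on [a,b], one has ‖u − u^R‖_{L²(a,b)} ≥ C h^{p+1} ( ( Σ_{i=1}^{N} h_min ‖D̃_i‖² )^{1/2} − |u|_{H^{p+1}} ). -/
open MeasureTheory

noncomputable section

/-- Maximal mesh size `h` of the partition `x 0 < x 1 < ... < x (N+1)`. -/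
def meshH (N : ℕ) (x : ℕ → ℝ) : ℝ :=
  (Finset.range (N + 1)).sup' (Finset.nonempty_range_iff.mpr (Nat.succ_ne_zero N))
    (fun i => x (i + 1) - x i)

/-- Minimal mesh size `h_min`. -/
def meshHmin (N : ℕ) (x : ℕ → ℝ) : ℝ :=
  (Finset.range (N + 1)).inf' (Finset.nonempty_range_iff.mpr (Nat.succ_ne_zero N))
    (fun i => x (i + 1) - x i)

/-- Jump of the `k`-th derivative of the piecewise polynomial `P` at the node `x i`. -/
def jumpD (P : ℕ → Polynomial ℝ) (x : ℕ → ℝ) (i k : ℕ) : ℝ :=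
  (Polynomial.derivative^[k] (P i)).eval (x i)
    - (Polynomial.derivative^[k] (P (i - 1))).eval (x i)

/-- Euclidean norm of the scaled jump vector `D̃_i = (J_i^(k) h_min^k / h^(p+1))_{k=0}^p`. -/
def normDTilde (p N : ℕ) (x : ℕ → ℝ) (P : ℕ → Polynomial ℝ) (i : ℕ) : ℝ :=
  Real.sqrt (∑ k ∈ Finset.range (p + 1),
    (jumpD P x i k * meshHmin N x ^ k / meshH N x ^ (p + 1)) ^ 2)

/-- `L²` distance between `u` and the piecewise polynomial `u^R` defined by `P`. -/
def distL2 (N : ℕ) (x : ℕ → ℝ) (P : ℕ → Polynomial ℝ) (u : ℝ → ℝ) : ℝ :=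
  Real.sqrt (∑ i ∈ Finset.range (N + 1),
    ∫ t in (x i)..(x (i + 1)), (u t - (P i).eval t) ^ 2)

/-- Sobolev seminorm `|u|_{H^{p+1}}` on `(a,b)`. -/
def semiH (p : ℕ) (a b : ℝ) (u : ℝ → ℝ) : ℝ :=
  Real.sqrt (∫ t in a..b, (iteratedDerivWithin (p + 1) u (Set.Icc a b) t) ^ 2)

/-!
At an interior node `c = x i`, test the error against a polynomial `ψ` living on the window
`[c - δ, c + δ]`, `δ ≍ h_min`, whose derivatives of order `≤ p` vanish at both ends of the window
and whose derivatives at `c` are `ψ^(p-k)(c) = (-1)^k J^(k) δ^(2k)`. Integrating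
`∫ (u - P) ψ^(p+1)` by parts `p + 1` times on each half-window, the values of `u` at `c` cancel,
`P^(p+1) = 0`, and the boundary terms at `c` add up to `∑ₖ (J^(k) δ^k)²`. Hence this sum equals
the pairing of `u - u^R` with `ψ^(p+1)` plus the pairing of `u^(p+1)` with `ψ`; both are bounded
by AM-GM on the window, using that `|ψ^(j)| ≲ δ^(-j) ∑ₖ |J^(k)| δ^(p+k)`. Taking `δ` a small
fixed multiple of `h_min` makes the `u^(p+1)` term carry a factor `≤ 1/2`. Summing over the nodes
(every cell borders at most two of them) gives
`h_min ∑ᵢ ∑ₖ (J_i^(k) h_min^k)² ≤ K ‖u - u^R‖² + h_min^(2p+2) |u|²_{H^(p+1)}`; dividing by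
`h^(2p+2) ≥ h_min^(2p+2)` and taking square roots gives the theorem.
-/

open Polynomial Finset Set intervalIntegral
open scoped Interval Nat

namespace L2ErrorLowerBound

theorem eval_iterate_derivative_eq_zero_of_pow_dvd {R : Type*} [CommRing R] {q : R[X]} {c : R}
    {n j : ℕ} (h : (X - C c) ^ n ∣ q) (hj : j < n) : (derivative^[j] q).eval c = 0 :=
  dvd_iff_isRoot.mp <| (dvd_pow_self _ (Nat.sub_ne_zero_of_lt hj)).trans
    (pow_sub_dvd_iterate_derivative_of_pow_dvd j h)

theorem eval_zero_iterate_derivative {R : Type*} [CommSemiring R] (q : R[X]) (j : ℕ) :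
    (derivative^[j] q).eval 0 = j ! * q.coeff j := by
  rw [← coeff_zero_eq_eval_zero, coeff_iterate_derivative, zero_add, Nat.descFactorial_self,
    nsmul_eq_mul]

theorem exists_cutoff_poly (p : ℕ) :
    ∃ G : ℝ[X], X ^ (p + 1) ∣ G - 1 ∧ (1 - X ^ 2) ^ (p + 1) ∣ G := by
  obtain ⟨a, b, hab⟩ := (show IsCoprime (X : ℝ[X]) (1 - X ^ 2) from ⟨X, 1, by ring⟩).pow
    (m := p + 1) (n := p + 1)
  exact ⟨b * (1 - X ^ 2) ^ (p + 1), ⟨-a, by linear_combination hab⟩, dvd_mul_left _ _⟩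

theorem exists_jet_basis (p : ℕ) : ∃ B : ℕ → ℝ[X], ∀ m, ∀ j ≤ p,
    (derivative^[j] (B m)).eval 0 = (if j = m then 1 else 0) ∧
      (derivative^[j] (B m)).eval 1 = 0 ∧ (derivative^[j] (B m)).eval (-1) = 0 := by
  obtain ⟨G, hG0, hG1⟩ := exists_cutoff_poly p
  have hGcoeff : ∀ i ≤ p, G.coeff i = if i = 0 then 1 else 0 := fun i hi => by
    have := X_pow_dvd_iff.mp hG0 i (by omega)
    rw [coeff_sub, coeff_one] at this
    split_ifs at this ⊢ <;> linarith
  refine ⟨fun m => C (m ! : ℝ)⁻¹ * X ^ m * G, fun m j hj => ⟨?_, ?_, ?_⟩⟩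
  · dsimp only
    rw [eval_zero_iterate_derivative, mul_assoc, coeff_C_mul, coeff_X_pow_mul']
    split_ifs with hmj hjm hjm
    · subst hjm; simp [hGcoeff 0 (Nat.zero_le p), (Nat.factorial_pos j).ne']
    · rw [hGcoeff _ (by omega), if_neg (by omega), mul_zero, mul_zero]
    · omega
    · rw [mul_zero, mul_zero]
  all_goals
    refine eval_iterate_derivative_eq_zero_of_pow_dvd
      ((pow_dvd_pow_of_dvd ?_ (p + 1)).trans (hG1.trans (dvd_mul_left _ _))) (Nat.lt_succ_of_le hj)
  · exact ⟨-(X + 1), by simp only [map_one]; ring⟩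
  · exact ⟨1 - X, by simp only [map_neg, map_one]; ring⟩

theorem exists_bump_poly (p : ℕ) :
    ∃ Λ : ℝ, 0 < Λ ∧ ∀ α : ℕ → ℝ, ∃ Q : ℝ[X],
      (∀ j ≤ p, (derivative^[j] Q).eval 0 = α j ∧ (derivative^[j] Q).eval 1 = 0 ∧
        (derivative^[j] Q).eval (-1) = 0) ∧
      ∀ j ≤ p + 1, ∀ t ∈ Icc (-1 : ℝ) 1,
        |(derivative^[j] Q).eval t| ≤ Λ * ∑ m ∈ range (p + 1), |α m| := by
  obtain ⟨B, hB⟩ := exists_jet_basis p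
  have hcont : ContinuousOn (fun t => ∑ m ∈ range (p + 1), ∑ j ∈ range (p + 2),
      |(derivative^[j] (B m)).eval t|) (Icc (-1) 1) := by fun_prop
  obtain ⟨Λ, hΛ⟩ := isCompact_Icc.exists_bound_of_continuousOn hcont
  refine ⟨max Λ 1, by positivity, fun α => ⟨∑ m ∈ range (p + 1), C (α m) * B m, ?_⟩⟩
  have hQ : ∀ j t, (derivative^[j] (∑ m ∈ range (p + 1), C (α m) * B m)).eval t =
      ∑ m ∈ range (p + 1), α m * (derivative^[j] (B m)).eval t := by
    simp only [iterate_derivative_sum, iterate_derivative_C_mul, eval_finsetSum, eval_mul, eval_C,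
      implies_true]
  refine ⟨fun j hj => ⟨?_, ?_, ?_⟩, fun j hj t ht => ?_⟩
  · simp only [hQ, (hB _ j hj).1, mul_ite, mul_one, mul_zero]
    rw [sum_ite_eq, if_pos (Finset.mem_range.2 (by omega))]
  · simp [hQ, (hB _ j hj).2.1]
  · simp [hQ, (hB _ j hj).2.2]
  · rw [hQ, mul_sum]
    refine (abs_sum_le_sum_abs _ _).trans (sum_le_sum fun m hm => ?_)
    rw [abs_mul, mul_comm]
    refine mul_le_mul_of_nonneg_right (le_trans ?_ (((le_abs_self _).trans (hΛ t ht)).trans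
      (le_max_left _ _))) (abs_nonneg _)
    refine (single_le_sum (f := fun j => |(derivative^[j] (B m)).eval t|)
      (fun _ _ => abs_nonneg _) (Finset.mem_range.2 (show j < p + 2 by omega))).trans ?_
    exact single_le_sum (f := fun m => ∑ j ∈ range (p + 2), |(derivative^[j] (B m)).eval t|)
      (fun _ _ => sum_nonneg fun _ _ => abs_nonneg _) hm

def rescaledDeriv (Q : ℝ[X]) (c δ : ℝ) (k : ℕ) (t : ℝ) : ℝ :=
  δ⁻¹ ^ k * (derivative^[k] Q).eval ((t - c) / δ)

theorem hasDerivAt_rescaledDeriv (Q : ℝ[X]) (c δ : ℝ) (k : ℕ) (t : ℝ) :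
    HasDerivAt (rescaledDeriv Q c δ k) (rescaledDeriv Q c δ (k + 1) t) t := by
  have h := ((derivative^[k] Q).hasDerivAt ((t - c) / δ)).comp t
    (((hasDerivAt_id t).sub_const c).div_const δ)
  refine (h.const_mul (δ⁻¹ ^ k)).congr_deriv ?_
  simp only [rescaledDeriv, Function.iterate_succ_apply']
  ring

def derivJump (Pl Pr : ℝ[X]) (c : ℝ) (k : ℕ) : ℝ :=
  (derivative^[k] Pr).eval c - (derivative^[k] Pl).eval c

theorem exists_jump_test_function (p : ℕ) :
    ∃ Λ : ℝ, 0 < Λ ∧ ∀ c δ : ℝ, 0 < δ → ∀ J : ℕ → ℝ, ∃ ψ : ℕ → ℝ → ℝ,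
      (∀ k t, HasDerivAt (ψ k) (ψ (k + 1) t) t) ∧
      (∀ k ≤ p, ψ k (c - δ) = 0 ∧ ψ k (c + δ) = 0) ∧
      ∑ k ∈ range (p + 1), (-1) ^ k * J k * ψ (p - k) c =
        ∑ k ∈ range (p + 1), (J k * δ ^ k) ^ 2 ∧
      ∀ t ∈ Icc (c - δ) (c + δ),
        |ψ 0 t| ≤ Λ * δ ^ p * ∑ k ∈ range (p + 1), |J k| * δ ^ k ∧
        |ψ (p + 1) t| ≤ Λ / δ * ∑ k ∈ range (p + 1), |J k| * δ ^ k := by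
  obtain ⟨Λ, hΛ, hbump⟩ := exists_bump_poly p
  refine ⟨Λ, hΛ, fun c δ hδ J => ?_⟩
  -- `ψ = Q ((· - c) / δ)`, with `Q^(p-k)(0) = (-1)^k J k δ^(p+k)`
  obtain ⟨Q, hjet, hbd⟩ := hbump fun j => (-1) ^ (p - j) * J (p - j) * δ ^ (2 * p - j)
  have hsum : ∑ m ∈ range (p + 1), |(-1) ^ (p - m) * J (p - m) * δ ^ (2 * p - m)| =
      δ ^ p * ∑ k ∈ range (p + 1), |J k| * δ ^ k := by
    rw [mul_sum, ← sum_range_reflect]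
    refine sum_congr rfl fun m hm => ?_
    have hm := mem_range.1 hm
    rw [show p - (p + 1 - 1 - m) = m by omega, show 2 * p - (p + 1 - 1 - m) = p + m by omega]
    simp only [abs_mul, abs_pow, abs_neg, abs_one, one_pow, one_mul, abs_of_pos hδ, pow_add]
    ring
  refine ⟨rescaledDeriv Q c δ, hasDerivAt_rescaledDeriv Q c δ, fun k hk => ⟨?_, ?_⟩, ?_,
    fun t ht => ?_⟩
  · rw [rescaledDeriv, show (c - δ - c) / δ = -1 by field_simp; ring, (hjet k hk).2.2, mul_zero]
  · rw [rescaledDeriv, show (c + δ - c) / δ = 1 by field_simp; ring, (hjet k hk).2.1, mul_zero]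
  · refine sum_congr rfl fun k hk => ?_
    have hk := mem_range.1 hk
    rw [rescaledDeriv, sub_self, zero_div, (hjet _ (Nat.sub_le _ _)).1,
      show p - (p - k) = k by omega, show 2 * p - (p - k) = (p - k) + 2 * k by omega, pow_add]
    have hsign : ((-1 : ℝ) ^ k) ^ 2 = 1 := by rw [← pow_mul, mul_comm, pow_mul]; simp
    have hδk : δ⁻¹ ^ (p - k) * δ ^ (p - k) = 1 := by
      rw [inv_pow, inv_mul_cancel₀ (by positivity)]
    linear_combination (J k ^ 2 * δ ^ (2 * k) * ((-1) ^ k) ^ 2) * hδk +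
      (J k ^ 2 * δ ^ (2 * k)) * hsign
  · have ht' : (t - c) / δ ∈ Icc (-1 : ℝ) 1 := by
      rw [Set.mem_Icc, le_div_iff₀ hδ, div_le_iff₀ hδ]
      constructor <;> linarith [ht.1, ht.2]
    have h0 := hbd 0 (Nat.zero_le _) _ ht'
    have hp := hbd (p + 1) le_rfl _ ht'
    rw [hsum] at h0 hp
    refine ⟨by simpa [rescaledDeriv, mul_assoc] using h0, ?_⟩
    rw [rescaledDeriv, abs_mul, abs_of_nonneg (by positivity)]
    calc δ⁻¹ ^ (p + 1) * |(derivative^[p + 1] Q).eval ((t - c) / δ)|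
        ≤ δ⁻¹ ^ (p + 1) * (Λ * (δ ^ p * ∑ k ∈ range (p + 1), |J k| * δ ^ k)) :=
          mul_le_mul_of_nonneg_left hp (by positivity)
      _ = Λ / δ * ∑ k ∈ range (p + 1), |J k| * δ ^ k := by
          rw [inv_pow, pow_succ]
          field_simp

theorem integral_mul_iterate_deriv_eq_sum (n : ℕ) {l r : ℝ} {f ψ : ℕ → ℝ → ℝ}
    (hf : ∀ k ≤ n, ∀ x ∈ [[l, r]], HasDerivWithinAt (f k) (f (k + 1) x) [[l, r]] x)
    (hψ : ∀ k ≤ n, ∀ x ∈ [[l, r]], HasDerivWithinAt (ψ k) (ψ (k + 1) x) [[l, r]] x)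
    (hfc : ContinuousOn (f (n + 1)) [[l, r]]) (hψc : ContinuousOn (ψ (n + 1)) [[l, r]]) :
    ∫ x in l..r, f 0 x * ψ (n + 1) x =
      ∑ k ∈ range (n + 1), (-1) ^ k * (f k r * ψ (n - k) r - f k l * ψ (n - k) l) +
        (-1) ^ (n + 1) * ∫ x in l..r, f (n + 1) x * ψ 0 x := by
  induction n generalizing f with
  | zero =>
    rw [integral_mul_deriv_eq_deriv_mul_of_hasDerivWithinAt (hf 0 le_rfl) (hψ 0 le_rfl)
      hfc.intervalIntegrable hψc.intervalIntegrable]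
    simp only [zero_add, range_one, sum_singleton, pow_zero, pow_one, one_mul, neg_one_mul,
      Nat.sub_zero]
    ring
  | succ n ih =>
    have hf1 : ContinuousOn (f 1) [[l, r]] := fun x hx =>
      (hf 1 (by omega) x hx).continuousWithinAt
    have hψn : ContinuousOn (ψ (n + 1)) [[l, r]] := fun x hx =>
      (hψ (n + 1) le_rfl x hx).continuousWithinAt
    rw [integral_mul_deriv_eq_deriv_mul_of_hasDerivWithinAt (hf 0 (Nat.zero_le _))
      (hψ (n + 1) le_rfl) hf1.intervalIntegrable hψc.intervalIntegrable,
      ih (f := fun k => f (k + 1)) (fun k hk => hf (k + 1) (by omega))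
        (fun k hk => hψ k (by omega)) hfc hψn, sum_range_succ' _ (n + 1)]
    simp only [Nat.add_sub_add_right, Nat.sub_zero, pow_succ, mul_neg_one, neg_mul,
      sum_neg_distrib]
    ring

theorem hasDerivWithinAt_iteratedDerivWithin {n k : ℕ} {s : Set ℝ} {u : ℝ → ℝ} {x : ℝ}
    (hs : UniqueDiffOn ℝ s) (hu : ContDiffOn ℝ n u s) (hk : k < n) (hx : x ∈ s) :
    HasDerivWithinAt (iteratedDerivWithin k u s) (iteratedDerivWithin (k + 1) u s x) s x := by
  rw [iteratedDerivWithin_succ]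
  exact ((hu.differentiableOn_iteratedDerivWithin (mod_cast hk) hs) x hx).hasDerivWithinAt

section IntegrationByParts

variable {p : ℕ} {a b : ℝ} {u : ℝ → ℝ} {ψ : ℕ → ℝ → ℝ}

theorem integral_sub_poly_mul_eq (hab : a < b) (hu : ContDiffOn ℝ (p + 1 : ℕ) u (Icc a b))
    {P : ℝ[X]} (hP : P.natDegree ≤ p) (hψ : ∀ k t, HasDerivAt (ψ k) (ψ (k + 1) t) t)
    {l r : ℝ} (hal : a ≤ l) (hlr : l ≤ r) (hrb : r ≤ b) :
    ∫ t in l..r, (u t - P.eval t) * ψ (p + 1) t =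
      ∑ k ∈ range (p + 1), (-1) ^ k *
        ((iteratedDerivWithin k u (Icc a b) r - (derivative^[k] P).eval r) * ψ (p - k) r -
          (iteratedDerivWithin k u (Icc a b) l - (derivative^[k] P).eval l) * ψ (p - k) l) +
      (-1) ^ (p + 1) * ∫ t in l..r, iteratedDerivWithin (p + 1) u (Icc a b) t * ψ 0 t := by
  have hsub : [[l, r]] ⊆ Icc a b := by
    rw [uIcc_of_le hlr]; exact Icc_subset_Icc hal hrb
  set f : ℕ → ℝ → ℝ := fun k t =>
    iteratedDerivWithin k u (Icc a b) t - (derivative^[k] P).eval t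
  have hf : ∀ k ≤ p, ∀ x ∈ [[l, r]], HasDerivWithinAt (f k) (f (k + 1) x) [[l, r]] x := by
    intro k hk x hx
    refine ((hasDerivWithinAt_iteratedDerivWithin (uniqueDiffOn_Icc hab) hu (by omega)
      (hsub hx)).mono hsub).sub ?_
    rw [Function.iterate_succ_apply']
    exact ((derivative^[k] P).hasDerivAt x).hasDerivWithinAt
  have htop : f (p + 1) = iteratedDerivWithin (p + 1) u (Icc a b) := by
    ext t; simp [f, iterate_derivative_eq_zero (Nat.lt_succ_of_le hP)]
  have h := integral_mul_iterate_deriv_eq_sum p hf (fun k _ x _ => (hψ k x).hasDerivWithinAt)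
    (htop ▸ (hu.continuousOn_iteratedDerivWithin le_rfl (uniqueDiffOn_Icc hab)).mono hsub)
    (fun x _ => (hψ (p + 1) x).continuousAt.continuousWithinAt)
  rw [htop] at h
  simpa only [f, iteratedDerivWithin_zero, Function.iterate_zero, id] using h

theorem sum_derivJump_mul_eq (hab : a < b) (hu : ContDiffOn ℝ (p + 1 : ℕ) u (Icc a b))
    {Pl Pr : ℝ[X]} (hPl : Pl.natDegree ≤ p) (hPr : Pr.natDegree ≤ p)
    (hψ : ∀ k t, HasDerivAt (ψ k) (ψ (k + 1) t) t) {l c r : ℝ}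
    (hal : a ≤ l) (hlc : l ≤ c) (hcr : c ≤ r) (hrb : r ≤ b)
    (hψl : ∀ k ≤ p, ψ k l = 0) (hψr : ∀ k ≤ p, ψ k r = 0) :
    ∑ k ∈ range (p + 1), (-1) ^ k * derivJump Pl Pr c k * ψ (p - k) c =
      (∫ t in l..c, (u t - Pl.eval t) * ψ (p + 1) t) +
        (∫ t in c..r, (u t - Pr.eval t) * ψ (p + 1) t) -
        (-1) ^ (p + 1) * ((∫ t in l..c, iteratedDerivWithin (p + 1) u (Icc a b) t * ψ 0 t) +
          ∫ t in c..r, iteratedDerivWithin (p + 1) u (Icc a b) t * ψ 0 t) := by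
  rw [integral_sub_poly_mul_eq hab hu hPl hψ hal hlc (hcr.trans hrb),
    integral_sub_poly_mul_eq hab hu hPr hψ (hal.trans hlc) hcr hrb]
  set D := fun k => iteratedDerivWithin k u (Icc a b)
  have hterm : ∀ k ∈ range (p + 1), (-1) ^ k * derivJump Pl Pr c k * ψ (p - k) c -
      ((-1) ^ k * ((D k c - (derivative^[k] Pl).eval c) * ψ (p - k) c -
          (D k l - (derivative^[k] Pl).eval l) * ψ (p - k) l) +
        (-1) ^ k * ((D k r - (derivative^[k] Pr).eval r) * ψ (p - k) r -
          (D k c - (derivative^[k] Pr).eval c) * ψ (p - k) c)) = 0 := by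
    intro k _
    rw [hψl _ (Nat.sub_le _ _), hψr _ (Nat.sub_le _ _), derivJump]
    ring
  have h := sum_eq_zero hterm
  rw [sum_sub_distrib, sum_add_distrib] at h
  linear_combination h

end IntegrationByParts

theorem abs_integral_mul_le {f v : ℝ → ℝ} {l r M τ : ℝ} (hlr : l ≤ r) (hτ : 0 < τ)
    (hf : ContinuousOn f (Icc l r)) (hv : ContinuousOn v (Icc l r))
    (hM : ∀ x ∈ Icc l r, |v x| ≤ M) :
    |∫ x in l..r, f x * v x| ≤ τ / 2 * (∫ x in l..r, f x ^ 2) + (r - l) * M ^ 2 / (2 * τ) := by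
  have hf2 : IntervalIntegrable (fun x => f x ^ 2) volume l r :=
    (hf.pow 2).intervalIntegrable_of_Icc hlr
  calc |∫ x in l..r, f x * v x| ≤ ∫ x in l..r, |f x * v x| := abs_integral_le_integral_abs hlr
    _ ≤ ∫ x in l..r, (τ / 2 * f x ^ 2 + M ^ 2 / (2 * τ)) := by
        refine integral_mono_on hlr ((hf.mul hv).abs.intervalIntegrable_of_Icc hlr)
          ((hf2.const_mul _).add intervalIntegrable_const) fun x hx => ?_
        have hfv : |f x * v x| ≤ |f x| * M := by
          rw [abs_mul]; exact mul_le_mul_of_nonneg_left (hM x hx) (abs_nonneg _)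
        have hamgm : τ / 2 * f x ^ 2 + M ^ 2 / (2 * τ) - |f x| * M =
            (τ * |f x| - M) ^ 2 / (2 * τ) := by
          rw [← sq_abs (f x)]; field_simp; ring
        nlinarith [div_nonneg (sq_nonneg (τ * |f x| - M)) (by positivity : (0 : ℝ) ≤ 2 * τ)]
    _ = τ / 2 * (∫ x in l..r, f x ^ 2) + (r - l) * M ^ 2 / (2 * τ) := by
        rw [integral_add (hf2.const_mul _) intervalIntegrable_const,
          intervalIntegral.integral_const_mul, intervalIntegral.integral_const, smul_eq_mul]
        ring

theorem abs_integral_mul_add_abs_integral_mul_le {fl fr v : ℝ → ℝ} {c δ M τ : ℝ} (hδ : 0 ≤ δ)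
    (hτ : 0 < τ) (hfl : ContinuousOn fl (Icc (c - δ) c)) (hfr : ContinuousOn fr (Icc c (c + δ)))
    (hv : ContinuousOn v (Icc (c - δ) (c + δ))) (hM : ∀ x ∈ Icc (c - δ) (c + δ), |v x| ≤ M) :
    |∫ x in (c - δ)..c, fl x * v x| + |∫ x in c..(c + δ), fr x * v x| ≤
      τ / 2 * ((∫ x in (c - δ)..c, fl x ^ 2) + ∫ x in c..(c + δ), fr x ^ 2) + δ * M ^ 2 / τ := by
  have hl := abs_integral_mul_le (by linarith) hτ hfl
    (hv.mono (Icc_subset_Icc le_rfl (by linarith))) fun x hx => hM x ⟨hx.1, by linarith [hx.2]⟩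
  have hr := abs_integral_mul_le (by linarith) hτ hfr
    (hv.mono (Icc_subset_Icc (by linarith) le_rfl)) fun x hx => hM x ⟨by linarith [hx.1], hx.2⟩
  have hlen : (c - (c - δ)) * M ^ 2 / (2 * τ) + (c + δ - c) * M ^ 2 / (2 * τ) = δ * M ^ 2 / τ := by
    field_simp; ring
  linarith

theorem jumps_le_window (p : ℕ) : ∃ K : ℝ, 0 < K ∧
    ∀ {a b c δ : ℝ} {u : ℝ → ℝ} {Pl Pr : ℝ[X]},
    ContDiffOn ℝ (p + 1 : ℕ) u (Icc a b) → Pl.natDegree ≤ p → Pr.natDegree ≤ p →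
    0 < δ → a ≤ c - δ → c + δ ≤ b →
    δ * ∑ k ∈ range (p + 1), (derivJump Pl Pr c k * δ ^ k) ^ 2 ≤
      K * ((∫ t in (c - δ)..c, (u t - Pl.eval t) ^ 2) +
        ∫ t in c..(c + δ), (u t - Pr.eval t) ^ 2) +
      K * δ ^ (2 * p + 2) *
        ((∫ t in (c - δ)..c, iteratedDerivWithin (p + 1) u (Icc a b) t ^ 2) +
          ∫ t in c..(c + δ), iteratedDerivWithin (p + 1) u (Icc a b) t ^ 2) := by
  obtain ⟨Λ, hΛ, htest⟩ := exists_jump_test_function p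
  refine ⟨4 * Λ ^ 2 * (p + 1), by positivity, ?_⟩
  intro a b c δ u Pl Pr hu hPl hPr hδ hac hcb
  have hab : a < b := by linarith
  set K : ℝ := 4 * Λ ^ 2 * (p + 1)
  set g := iteratedDerivWithin (p + 1) u (Icc a b)
  set J := derivJump Pl Pr c
  set V := ∑ k ∈ range (p + 1), (J k * δ ^ k) ^ 2
  set T := ∑ k ∈ range (p + 1), |J k| * δ ^ k
  obtain ⟨ψ, hψ, hψ0, hpair, hbd⟩ := htest c δ hδ J
  have hid := sum_derivJump_mul_eq (l := c - δ) (c := c) (r := c + δ) hab hu hPl hPr hψ hac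
    (by linarith) (by linarith) hcb (fun k hk => (hψ0 k hk).1) (fun k hk => (hψ0 k hk).2)
  rw [hpair] at hid
  change V = _ at hid
  have hT : Λ ^ 2 * T ^ 2 / K ≤ V / 4 := by
    have := sq_sum_le_card_mul_sum_sq (s := range (p + 1)) (f := fun k => |J k| * δ ^ k)
    simp only [card_range, Nat.cast_add, Nat.cast_one, mul_pow, sq_abs] at this
    rw [div_le_iff₀ (by positivity)]
    simp only [K, T, V, mul_pow] at this ⊢
    nlinarith
  have hψc : ∀ k, ContinuousOn (ψ k) (Icc (c - δ) (c + δ)) := fun k t _ =>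
    (hψ k t).continuousAt.continuousWithinAt
  have hgc : ContinuousOn g (Icc a b) :=
    hu.continuousOn_iteratedDerivWithin le_rfl (uniqueDiffOn_Icc hab)
  -- AM-GM weights making each of the two error terms at most `V / 4`
  have hI := abs_integral_mul_add_abs_integral_mul_le (fl := fun t => u t - Pl.eval t)
    (fr := fun t => u t - Pr.eval t) hδ.le (by positivity : 0 < K / δ)
    ((hu.continuousOn.mono (Icc_subset_Icc hac (by linarith))).sub Pl.continuousOn)
    ((hu.continuousOn.mono (Icc_subset_Icc (by linarith) hcb)).sub Pr.continuousOn)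
    (hψc (p + 1)) fun t ht => (hbd t ht).2
  have hG := abs_integral_mul_add_abs_integral_mul_le hδ.le
    (by positivity : 0 < K * δ ^ (2 * p + 1))
    (hgc.mono (Icc_subset_Icc hac (by linarith))) (hgc.mono (Icc_subset_Icc (by linarith) hcb))
    (hψc 0) fun t ht => (hbd t ht).1
  rw [show δ * (Λ / δ * T) ^ 2 / (K / δ) = Λ ^ 2 * T ^ 2 / K by field_simp] at hI
  rw [show δ * (Λ * δ ^ p * T) ^ 2 / (K * δ ^ (2 * p + 1)) = Λ ^ 2 * T ^ 2 / K by
    field_simp; ring] at hG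
  have hsign : ∀ y : ℝ, -((-1) ^ (p + 1) * y) ≤ |y| := fun y => by
    simpa only [abs_mul, abs_pow, abs_neg, abs_one, one_pow, one_mul] using
      neg_le_abs ((-1 : ℝ) ^ (p + 1) * y)
  have hV : V ≤ K / δ * ((∫ t in (c - δ)..c, (u t - Pl.eval t) ^ 2) +
        ∫ t in c..(c + δ), (u t - Pr.eval t) ^ 2) +
      K * δ ^ (2 * p + 1) * ((∫ t in (c - δ)..c, g t ^ 2) + ∫ t in c..(c + δ), g t ^ 2) := by
    linarith [le_abs_self (∫ t in (c - δ)..c, (u t - Pl.eval t) * ψ (p + 1) t),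
      le_abs_self (∫ t in c..(c + δ), (u t - Pr.eval t) * ψ (p + 1) t),
      hsign ((∫ t in (c - δ)..c, g t * ψ 0 t) + ∫ t in c..(c + δ), g t * ψ 0 t),
      abs_add_le (∫ t in (c - δ)..c, g t * ψ 0 t) (∫ t in c..(c + δ), g t * ψ 0 t)]
  calc δ * V ≤ δ * (K / δ * ((∫ t in (c - δ)..c, (u t - Pl.eval t) ^ 2) +
        ∫ t in c..(c + δ), (u t - Pr.eval t) ^ 2) +
      K * δ ^ (2 * p + 1) * ((∫ t in (c - δ)..c, g t ^ 2) + ∫ t in c..(c + δ), g t ^ 2)) :=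
        mul_le_mul_of_nonneg_left hV hδ.le
    _ = _ := by field_simp; ring

theorem integral_sq_add_integral_sq_le {fl fr : ℝ → ℝ} {l c r δ : ℝ} (hδ : 0 ≤ δ)
    (hl : l ≤ c - δ) (hr : c + δ ≤ r) (hfl : ContinuousOn fl (Icc l c))
    (hfr : ContinuousOn fr (Icc c r)) :
    (∫ t in (c - δ)..c, fl t ^ 2) + (∫ t in c..(c + δ), fr t ^ 2) ≤
      (∫ t in l..c, fl t ^ 2) + ∫ t in c..r, fr t ^ 2 := by
  refine add_le_add (integral_mono_interval hl (by linarith) le_rfl ?_ ?_)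
    (integral_mono_interval le_rfl (by linarith) hr ?_ ?_)
  exacts [Filter.Eventually.of_forall fun _ => sq_nonneg _,
    (hfl.pow 2).intervalIntegrable_of_Icc (by linarith),
    Filter.Eventually.of_forall fun _ => sq_nonneg _,
    (hfr.pow 2).intervalIntegrable_of_Icc (by linarith)]

theorem pow_mul_sum_sq_le_sum_sq_mul_pow (J : ℕ → ℝ) (p : ℕ) {ε s : ℝ} (hε : 0 ≤ ε)
    (hε1 : ε ≤ 1) :
    ε ^ (2 * p) * ∑ k ∈ range (p + 1), (J k * s ^ k) ^ 2 ≤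
      ∑ k ∈ range (p + 1), (J k * (ε * s) ^ k) ^ 2 := by
  rw [mul_sum]
  refine sum_le_sum fun k hk => ?_
  calc ε ^ (2 * p) * (J k * s ^ k) ^ 2 ≤ ε ^ (2 * k) * (J k * s ^ k) ^ 2 :=
        mul_le_mul_of_nonneg_right (pow_le_pow_of_le_one hε hε1
          (by have := mem_range.1 hk; omega)) (sq_nonneg _)
    _ = (J k * (ε * s) ^ k) ^ 2 := by ring

theorem jumps_le_cells (p : ℕ) : ∃ K : ℝ, 0 < K ∧
    ∀ {a b l c r s : ℝ} {u : ℝ → ℝ} {Pl Pr : ℝ[X]},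
    ContDiffOn ℝ (p + 1 : ℕ) u (Icc a b) → Pl.natDegree ≤ p → Pr.natDegree ≤ p →
    a ≤ l → r ≤ b → 0 < s → s ≤ c - l → s ≤ r - c →
    s * ∑ k ∈ range (p + 1), (derivJump Pl Pr c k * s ^ k) ^ 2 ≤
      K * ((∫ t in l..c, (u t - Pl.eval t) ^ 2) + ∫ t in c..r, (u t - Pr.eval t) ^ 2) +
      s ^ (2 * p + 2) / 2 * ((∫ t in l..c, iteratedDerivWithin (p + 1) u (Icc a b) t ^ 2) +
        ∫ t in c..r, iteratedDerivWithin (p + 1) u (Icc a b) t ^ 2) := by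
  obtain ⟨K, hK, hwindow⟩ := jumps_le_window p
  set ε : ℝ := (2 * K + 1)⁻¹
  have hε : 0 < ε := by positivity
  have hε1 : ε ≤ 1 := inv_le_one_of_one_le₀ (by linarith)
  have hKε : K * ε ≤ 1 / 2 := by
    rw [← div_eq_mul_inv, div_le_iff₀ (by positivity)]; linarith
  refine ⟨K / ε ^ (2 * p + 1), by positivity, ?_⟩
  intro a b l c r s u Pl Pr hu hPl hPr hal hrb hs hsl hsr
  have hab : a < b := by linarith
  set g := iteratedDerivWithin (p + 1) u (Icc a b)
  have hδs : ε * s ≤ s := mul_le_of_le_one_left hs.le hε1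
  have hgc : ContinuousOn g (Icc a b) :=
    hu.continuousOn_iteratedDerivWithin le_rfl (uniqueDiffOn_Icc hab)
  have hA := integral_sq_add_integral_sq_le (fl := fun t => u t - Pl.eval t)
    (fr := fun t => u t - Pr.eval t) (by positivity : 0 ≤ ε * s) (by linarith) (by linarith)
    ((hu.continuousOn.mono (Icc_subset_Icc hal (by linarith))).sub Pl.continuousOn)
    ((hu.continuousOn.mono (Icc_subset_Icc (by linarith) hrb)).sub Pr.continuousOn)
  have hB := integral_sq_add_integral_sq_le (l := l) (c := c) (r := r)
    (by positivity : 0 ≤ ε * s) (by linarith) (by linarith)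
    (hgc.mono (Icc_subset_Icc hal (by linarith)))
    (hgc.mono (Icc_subset_Icc (by linarith) hrb))
  have hB0 : 0 ≤ (∫ t in l..c, g t ^ 2) + ∫ t in c..r, g t ^ 2 :=
    add_nonneg (integral_nonneg (by linarith) fun _ _ => sq_nonneg _)
      (integral_nonneg (by linarith) fun _ _ => sq_nonneg _)
  set A := (∫ t in l..c, (u t - Pl.eval t) ^ 2) + ∫ t in c..r, (u t - Pr.eval t) ^ 2
  set B := (∫ t in l..c, g t ^ 2) + ∫ t in c..r, g t ^ 2
  refine le_of_mul_le_mul_left ?_ (pow_pos hε (2 * p + 1))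
  calc ε ^ (2 * p + 1) * (s * ∑ k ∈ range (p + 1), (derivJump Pl Pr c k * s ^ k) ^ 2)
      = ε * s * (ε ^ (2 * p) * ∑ k ∈ range (p + 1), (derivJump Pl Pr c k * s ^ k) ^ 2) := by
        ring
    _ ≤ ε * s * ∑ k ∈ range (p + 1), (derivJump Pl Pr c k * (ε * s) ^ k) ^ 2 :=
        mul_le_mul_of_nonneg_left (pow_mul_sum_sq_le_sum_sq_mul_pow _ p hε.le hε1)
          (by positivity)
    _ ≤ K * A + K * (ε * s) ^ (2 * p + 2) * B :=
        (hwindow hu hPl hPr (by positivity) (by linarith) (by linarith)).trans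
          (add_le_add (mul_le_mul_of_nonneg_left hA hK.le)
            (mul_le_mul_of_nonneg_left hB (by positivity)))
    _ = ε ^ (2 * p + 1) * (K / ε ^ (2 * p + 1) * A) +
        ε ^ (2 * p + 1) * (K * ε * s ^ (2 * p + 2) * B) := by
        field_simp; ring
    _ ≤ ε ^ (2 * p + 1) * (K / ε ^ (2 * p + 1) * A) +
        ε ^ (2 * p + 1) * (1 / 2 * s ^ (2 * p + 2) * B) := by
        gcongr
    _ = ε ^ (2 * p + 1) * (K / ε ^ (2 * p + 1) * A + s ^ (2 * p + 2) / 2 * B) := by ring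

theorem sum_Icc_pred_add_add {R : Type*} [CommRing R] (f : ℕ → R) (N : ℕ) :
    ∑ i ∈ Finset.Icc 1 N, (f (i - 1) + f i) + f 0 + f N = 2 * ∑ j ∈ range (N + 1), f j := by
  induction N with
  | zero => simp; ring
  | succ N ih =>
    rw [sum_Icc_succ_top (by omega), sum_range_succ, Nat.add_sub_cancel]
    linear_combination ih

theorem sum_Icc_pred_add_le {N : ℕ} {f : ℕ → ℝ} (hf : ∀ j ≤ N, 0 ≤ f j) :
    ∑ i ∈ Finset.Icc 1 N, (f (i - 1) + f i) ≤ 2 * ∑ j ∈ range (N + 1), f j := by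
  linarith [sum_Icc_pred_add_add f N, hf 0 (Nat.zero_le N), hf N le_rfl]

section Partition

variable {N : ℕ} {x : ℕ → ℝ}

theorem meshHmin_le {i : ℕ} (hi : i ≤ N) : meshHmin N x ≤ x (i + 1) - x i :=
  inf'_le _ (Finset.mem_range.2 (Nat.lt_succ_of_le hi))

theorem le_meshH {i : ℕ} (hi : i ≤ N) : x (i + 1) - x i ≤ meshH N x :=
  le_sup' (fun i => x (i + 1) - x i) (Finset.mem_range.2 (Nat.lt_succ_of_le hi))

theorem meshHmin_le_meshH : meshHmin N x ≤ meshH N x :=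
  (meshHmin_le (Nat.zero_le N)).trans (le_meshH (Nat.zero_le N))

variable (hx : ∀ i ≤ N, x i < x (i + 1))
include hx

theorem meshHmin_pos : 0 < meshHmin N x :=
  (lt_inf'_iff _).2 fun i hi => sub_pos.2 (hx i (Nat.lt_succ_iff.1 (Finset.mem_range.1 hi)))

theorem mem_Icc_of_le_succ {i : ℕ} (hi : i ≤ N + 1) : x i ∈ Icc (x 0) (x (N + 1)) := by
  have hmono : ∀ j k, j ≤ k → k ≤ N + 1 → x j ≤ x k := by
    intro j k hjk hk
    induction k, hjk using Nat.le_induction with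
    | base => exact le_rfl
    | succ k _ ih => exact (ih (by omega)).trans (hx k (by omega)).le
  exact ⟨hmono 0 i (Nat.zero_le i) hi, hmono i (N + 1) hi le_rfl⟩

theorem semiH_sq_eq_sum {p : ℕ} {u : ℝ → ℝ}
    (hu : ContDiffOn ℝ (p + 1 : ℕ) u (Icc (x 0) (x (N + 1)))) :
    semiH p (x 0) (x (N + 1)) u ^ 2 = ∑ j ∈ range (N + 1),
      ∫ t in x j..x (j + 1), iteratedDerivWithin (p + 1) u (Icc (x 0) (x (N + 1))) t ^ 2 := by
  have hab : x 0 < x (N + 1) :=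
    (hx 0 (Nat.zero_le N)).trans_le (mem_Icc_of_le_succ hx (by omega : 1 ≤ N + 1)).2
  have hgc := hu.continuousOn_iteratedDerivWithin le_rfl (uniqueDiffOn_Icc hab)
  have hsum := sum_integral_adjacent_intervals (μ := volume) (a := x) (n := N + 1)
    (f := fun t => iteratedDerivWithin (p + 1) u (Icc (x 0) (x (N + 1))) t ^ 2)
    fun k hk => ((hgc.mono (Icc_subset_Icc (mem_Icc_of_le_succ hx (by omega)).1
      (mem_Icc_of_le_succ hx (by omega)).2)).pow 2).intervalIntegrable_of_Icc (hx k (by omega)).le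
  rw [semiH, Real.sq_sqrt (integral_nonneg hab.le fun _ _ => sq_nonneg _)]
  exact hsum.symm

end Partition

theorem sum_jumps_le (p : ℕ) : ∃ K : ℝ, 0 < K ∧ ∀ (N : ℕ) (x : ℕ → ℝ),
    (∀ i ≤ N, x i < x (i + 1)) → ∀ P : ℕ → ℝ[X], (∀ i ≤ N, (P i).natDegree ≤ p) →
    ∀ u : ℝ → ℝ, ContDiffOn ℝ (p + 1 : ℕ) u (Icc (x 0) (x (N + 1))) →
    ∑ i ∈ Finset.Icc 1 N, meshHmin N x *
        ∑ k ∈ range (p + 1), (jumpD P x i k * meshHmin N x ^ k) ^ 2 ≤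
      K * distL2 N x P u ^ 2 + meshHmin N x ^ (2 * p + 2) * semiH p (x 0) (x (N + 1)) u ^ 2 := by
  obtain ⟨K, hK, hcells⟩ := jumps_le_cells p
  refine ⟨2 * K, by positivity, fun N x hx P hP u hu => ?_⟩
  set s := meshHmin N x
  have hs : 0 < s := meshHmin_pos hx
  set e : ℕ → ℝ := fun j => ∫ t in x j..x (j + 1), (u t - (P j).eval t) ^ 2
  set e' : ℕ → ℝ := fun j =>
    ∫ t in x j..x (j + 1), iteratedDerivWithin (p + 1) u (Icc (x 0) (x (N + 1))) t ^ 2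
  have hnode : ∀ i ∈ Finset.Icc 1 N,
      s * ∑ k ∈ range (p + 1), (jumpD P x i k * s ^ k) ^ 2 ≤
        K * (e (i - 1) + e i) + s ^ (2 * p + 2) / 2 * (e' (i - 1) + e' i) := by
    intro i hi
    obtain ⟨hi1, hiN⟩ := Finset.mem_Icc.1 hi
    have hi' : i - 1 + 1 = i := Nat.sub_add_cancel hi1
    have hsl : s ≤ x i - x (i - 1) := by
      simpa only [hi'] using meshHmin_le (x := x) (i := i - 1) (by omega)
    have h := hcells (Pl := P (i - 1)) (l := x (i - 1)) (c := x i) (r := x (i + 1)) hu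
      (hP _ (by omega)) (hP i hiN) (mem_Icc_of_le_succ hx (by omega)).1
      (mem_Icc_of_le_succ hx (by omega)).2 hs hsl (meshHmin_le hiN)
    simp only [e, e']
    rw [hi']
    exact h
  have he : ∀ j ≤ N, 0 ≤ e j := fun j hj => integral_nonneg (hx j hj).le fun _ _ => sq_nonneg _
  have he' : ∀ j ≤ N, 0 ≤ e' j := fun j hj => integral_nonneg (hx j hj).le fun _ _ => sq_nonneg _
  have hdist : distL2 N x P u ^ 2 = ∑ j ∈ range (N + 1), e j :=
    Real.sq_sqrt (sum_nonneg fun j hj => he j (Nat.lt_succ_iff.1 (Finset.mem_range.1 hj)))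
  calc ∑ i ∈ Finset.Icc 1 N, s * ∑ k ∈ range (p + 1), (jumpD P x i k * s ^ k) ^ 2
      ≤ K * ∑ i ∈ Finset.Icc 1 N, (e (i - 1) + e i) +
        s ^ (2 * p + 2) / 2 * ∑ i ∈ Finset.Icc 1 N, (e' (i - 1) + e' i) := by
        rw [mul_sum, mul_sum, ← sum_add_distrib]; exact sum_le_sum hnode
    _ ≤ K * (2 * ∑ j ∈ range (N + 1), e j) +
        s ^ (2 * p + 2) / 2 * (2 * ∑ j ∈ range (N + 1), e' j) :=
        add_le_add (mul_le_mul_of_nonneg_left (sum_Icc_pred_add_le he) hK.le)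
          (mul_le_mul_of_nonneg_left (sum_Icc_pred_add_le he') (by positivity))
    _ = 2 * K * distL2 N x P u ^ 2 + s ^ (2 * p + 2) * semiH p (x 0) (x (N + 1)) u ^ 2 := by
        rw [hdist, semiH_sq_eq_sum hx hu]; ring

theorem sqrt_sub_le_of_le_sq_add_sq {S D G c : ℝ} (hc : 0 ≤ c) (hD : 0 ≤ D) (hG : 0 ≤ G)
    (h : S ≤ c ^ 2 * D ^ 2 + G ^ 2) : √S - G ≤ c * D := by
  have : √S ≤ c * D + G := Real.sqrt_le_iff.2 ⟨by positivity, by nlinarith [mul_nonneg hc hD]⟩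
  linarith

theorem normDTilde_sq (p N : ℕ) (x : ℕ → ℝ) (P : ℕ → ℝ[X]) (i : ℕ) :
    normDTilde p N x P i ^ 2 =
      (∑ k ∈ range (p + 1), (jumpD P x i k * meshHmin N x ^ k) ^ 2) / meshH N x ^ (2 * p + 2) := by
  rw [normDTilde, Real.sq_sqrt (sum_nonneg fun _ _ => sq_nonneg _), sum_div]
  refine sum_congr rfl fun k _ => ?_
  rw [div_pow, ← pow_mul]
  ring_nf

end L2ErrorLowerBound

open L2ErrorLowerBound in
/-- Theorem 2.2 (1-D lower bound for the `L²` error in terms of scaled jumps). -/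
theorem l2_error_lower_bound (p : ℕ) :
    ∃ C : ℝ, 0 < C ∧
      ∀ (N : ℕ), 1 ≤ N → ∀ (a b : ℝ), a < b →
      ∀ (x : ℕ → ℝ), x 0 = a → x (N + 1) = b → (∀ i ≤ N, x i < x (i + 1)) →
      ∀ (P : ℕ → Polynomial ℝ), (∀ i ≤ N, (P i).natDegree ≤ p) →
      ∀ (u : ℝ → ℝ), ContDiffOn ℝ (p + 1 : ℕ) u (Set.Icc a b) →
      distL2 N x P u ≥
        C * meshH N x ^ (p + 1) *
          (Real.sqrt (∑ i ∈ Finset.Icc 1 N, meshHmin N x * (normDTilde p N x P i) ^ 2)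
            - semiH p a b u) := by
  obtain ⟨K, hK, hsum⟩ := sum_jumps_le p
  refine ⟨(√K)⁻¹, by positivity, fun N _ a b _ x hx0 hxN hx P hP u hu => ?_⟩
  subst hx0 hxN
  set h := meshH N x
  set s := meshHmin N x
  have hs : 0 < s := meshHmin_pos hx
  have hh : 0 < h := hs.trans_le meshHmin_le_meshH
  have hbound : ∑ i ∈ Finset.Icc 1 N, s * normDTilde p N x P i ^ 2 ≤
      (√K / h ^ (p + 1)) ^ 2 * distL2 N x P u ^ 2 + semiH p (x 0) (x (N + 1)) u ^ 2 := by
    simp only [normDTilde_sq, mul_div_assoc', ← sum_div]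
    rw [div_le_iff₀ (by positivity)]
    calc ∑ i ∈ Finset.Icc 1 N, s * ∑ k ∈ range (p + 1), (jumpD P x i k * s ^ k) ^ 2
        ≤ K * distL2 N x P u ^ 2 + s ^ (2 * p + 2) * semiH p (x 0) (x (N + 1)) u ^ 2 :=
          hsum N x hx P hP u hu
      _ ≤ K * distL2 N x P u ^ 2 + h ^ (2 * p + 2) * semiH p (x 0) (x (N + 1)) u ^ 2 := by
          gcongr; exact meshHmin_le_meshH
      _ = _ := by rw [div_pow, Real.sq_sqrt hK.le]; field_simp; ring
  have hdist := sqrt_sub_le_of_le_sq_add_sq (by positivity) (Real.sqrt_nonneg _)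
    (Real.sqrt_nonneg _) hbound
  calc (√K)⁻¹ * h ^ (p + 1) *
        (√(∑ i ∈ Finset.Icc 1 N, s * normDTilde p N x P i ^ 2) - semiH p (x 0) (x (N + 1)) u)
      ≤ (√K)⁻¹ * h ^ (p + 1) * (√K / h ^ (p + 1) * distL2 N x P u) :=
        mul_le_mul_of_nonneg_left hdist (by positivity)
    _ = distL2 N x P u := by field_simp
end
end

section
/- There exists a constant C > 0 depending only on p such that for every partition of [a,b], every piecewise polynomial u^R = (P₀,…,P_N) of degree ≤ p with respect to it, and every function u that is (p+1)-times continuously differentiable on [a,b], one has ‖u − u^R‖_{L^∞(a,b)} ≥ C h^{p+1} ( (h_min/h)^{1/2} · max_{1≤i≤N} ‖D̃_i‖ − |u|_{W^{p+1}_∞} ). -/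
open MeasureTheory

noncomputable section

/-- `L^∞` distance between `u` and the piecewise polynomial `u^R` defined by `P`. -/
def distLinf (N : ℕ) (x : ℕ → ℝ) (P : ℕ → Polynomial ℝ) (u : ℝ → ℝ) : ℝ :=
  (Finset.range (N + 1)).sup' (Finset.nonempty_range_iff.mpr (Nat.succ_ne_zero N))
    (fun i => sSup ((fun t => |u t - (P i).eval t|) '' Set.Icc (x i) (x (i + 1))))

/-- Sobolev seminorm `|u|_{W^{p+1}_∞}` on `[a,b]`. -/
def semiWinf (p : ℕ) (a b : ℝ) (u : ℝ → ℝ) : ℝ :=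
  sSup ((fun t => |iteratedDerivWithin (p + 1) u (Set.Icc a b) t|) '' Set.Icc a b)

/-!
Around an interior node `x_i` take `δ = h_min / μ` and the Taylor polynomial `T` of `u` on
`[x_i - δ, x_i + δ]`, so that `|u - T| ≤ |u|_{W^{p+1}_∞} (2δ)^{p+1}` there. Then `P_i - T` and
`P_{i-1} - T` have degree `≤ p` and are bounded by `B = ‖u - u^R‖_∞ + |u|_{W^{p+1}_∞} (2δ)^{p+1}` on
`[x_i, x_i + δ]` and `[x_i - δ, x_i]` respectively. By a Markov-type inequality (norms on the
polynomials of degree `≤ p` are equivalent; made explicit through Lagrange interpolation on `[0, 1]`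
and rescaled), their `k`-th derivatives at `x_i` are `O(B / δ^k)`, hence so is the jump `J_i^{(k)}`.
Multiplying by `h_min^k / h^{p+1}` and choosing the constant `μ` large enough, the Taylor part of
`B` contributes at most `|u|_{W^{p+1}_∞}` to `‖D̃_i‖`; finally `√(h_min / h) ≤ 1`.
-/

open Polynomial Set

theorem Polynomial.iterate_derivative_comp_C_mul_X_add_C {R : Type*} [CommSemiring R] (Q : R[X])
    (a b : R) (k : ℕ) :
    derivative^[k] (Q.comp (C a * X + C b)) =
      C (a ^ k) * (derivative^[k] Q).comp (C a * X + C b) := by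
  induction k generalizing Q with
  | zero => simp
  | succ k ih =>
    simp [Function.iterate_succ_apply, derivative_comp, ih, iterate_derivative_C_mul, pow_succ]
    ring

def unitNodes (p j : ℕ) : ℝ := j / (p + 1)

theorem injOn_unitNodes (p : ℕ) : InjOn (unitNodes p) (Finset.range (p + 1)) := by
  intro i _ j _ h
  have : (p : ℝ) + 1 ≠ 0 := by positivity
  simpa [unitNodes, div_left_inj' this] using h

theorem unitNodes_mem_Icc {p j : ℕ} (hj : j ∈ Finset.range (p + 1)) :
    unitNodes p j ∈ Icc 0 1 := by
  have hj : (j : ℝ) ≤ p + 1 := by exact_mod_cast (Finset.mem_range.mp hj).le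
  exact ⟨by unfold unitNodes; positivity, div_le_one_of_le₀ hj (by positivity)⟩

/-- Interpolating at the nodes `unitNodes p` writes `Q^(k)(0)` as a combination of the values of
`Q` at these nodes; `markovConst p` bounds the sum of the absolute coefficients for all `k ≤ p`. -/
def markovConst (p : ℕ) : ℝ :=
  ∑ k ∈ Finset.range (p + 1), ∑ j ∈ Finset.range (p + 1),
    |(derivative^[k] (Lagrange.basis (Finset.range (p + 1)) (unitNodes p) j)).eval 0|

theorem sum_abs_iterate_derivative_basis_le_markovConst {p k : ℕ} (hk : k ≤ p) :
    ∑ j ∈ Finset.range (p + 1),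
      |(derivative^[k] (Lagrange.basis (Finset.range (p + 1)) (unitNodes p) j)).eval 0| ≤
      markovConst p :=
  Finset.single_le_sum (f := fun k => ∑ j ∈ Finset.range (p + 1),
      |(derivative^[k] (Lagrange.basis (Finset.range (p + 1)) (unitNodes p) j)).eval 0|)
    (fun _ _ => Finset.sum_nonneg fun _ _ => abs_nonneg _)
    (Finset.mem_range.mpr (Nat.lt_succ_of_le hk))

theorem one_le_markovConst (p : ℕ) : 1 ≤ markovConst p := by
  have h0 : (Lagrange.basis (Finset.range (p + 1)) (unitNodes p) 0).eval 0 = 1 := by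
    simpa [unitNodes] using
      Lagrange.eval_basis_self (injOn_unitNodes p) (Finset.mem_range.mpr p.succ_pos)
  refine le_trans ?_ (sum_abs_iterate_derivative_basis_le_markovConst (Nat.zero_le p))
  refine le_of_eq_of_le ?_ (Finset.single_le_sum (fun _ _ => abs_nonneg _)
    (Finset.mem_range.mpr p.succ_pos))
  simp [h0]

theorem abs_iterate_derivative_eval_zero_le {p k : ℕ} {Q : ℝ[X]} {B : ℝ}
    (hQ : Q.natDegree ≤ p) (hk : k ≤ p) (hB : ∀ t ∈ Icc (0 : ℝ) 1, |Q.eval t| ≤ B) :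
    |(derivative^[k] Q).eval 0| ≤ markovConst p * B := by
  have hB0 : 0 ≤ B := (abs_nonneg _).trans (hB 0 ⟨le_rfl, zero_le_one⟩)
  have hdeg : Q.degree < (Finset.range (p + 1)).card := by
    rw [Finset.card_range]
    exact degree_le_natDegree.trans_lt (by exact_mod_cast Nat.lt_succ_of_le hQ)
  have hinterp : (derivative^[k] Q).eval 0 = ∑ j ∈ Finset.range (p + 1), Q.eval (unitNodes p j) *
      (derivative^[k] (Lagrange.basis (Finset.range (p + 1)) (unitNodes p) j)).eval 0 := by
    conv_lhs => rw [Lagrange.eq_interpolate (injOn_unitNodes p) hdeg]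
    simp [Lagrange.interpolate_apply, iterate_derivative_sum, iterate_derivative_C_mul,
      eval_finsetSum]
  calc |(derivative^[k] Q).eval 0|
      ≤ ∑ j ∈ Finset.range (p + 1), B *
          |(derivative^[k] (Lagrange.basis (Finset.range (p + 1)) (unitNodes p) j)).eval 0| := by
        rw [hinterp]
        refine (Finset.abs_sum_le_sum_abs _ _).trans (Finset.sum_le_sum fun j hj => ?_)
        rw [abs_mul]
        exact mul_le_mul_of_nonneg_right (hB _ (unitNodes_mem_Icc hj)) (abs_nonneg _)
    _ ≤ markovConst p * B := by
        rw [← Finset.mul_sum, mul_comm]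
        exact mul_le_mul_of_nonneg_right (sum_abs_iterate_derivative_basis_le_markovConst hk) hB0

theorem abs_iterate_derivative_eval_le {p k : ℕ} {Q : ℝ[X]} {x₀ ℓ B : ℝ}
    (hQ : Q.natDegree ≤ p) (hk : k ≤ p) (hℓ : ℓ ≠ 0)
    (hB : ∀ t ∈ uIcc x₀ (x₀ + ℓ), |Q.eval t| ≤ B) :
    |(derivative^[k] Q).eval x₀| ≤ markovConst p * B / |ℓ| ^ k := by
  set R := Q.comp (C ℓ * X + C x₀)
  have hR : R.natDegree ≤ p := natDegree_comp_le.trans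
    (by simpa using Nat.mul_le_mul hQ (natDegree_linear_le (a := ℓ) (b := x₀)))
  have hRB : ∀ t ∈ Icc (0 : ℝ) 1, |R.eval t| ≤ B := by
    intro t ⟨ht0, ht1⟩
    have hmem : x₀ + ℓ * t ∈ uIcc x₀ (x₀ + ℓ) := by
      rcases le_total 0 ℓ with hℓ0 | hℓ0
      · exact mem_uIcc.mpr (Or.inl ⟨by nlinarith, by nlinarith⟩)
      · exact mem_uIcc.mpr (Or.inr ⟨by nlinarith, by nlinarith⟩)
    simpa [R, add_comm] using hB _ hmem
  have hscale : (derivative^[k] R).eval 0 = ℓ ^ k * (derivative^[k] Q).eval x₀ := by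
    simp [R, iterate_derivative_comp_C_mul_X_add_C]
  have hmarkov := abs_iterate_derivative_eval_zero_le hR hk hRB
  rw [hscale, abs_mul, abs_pow] at hmarkov
  rw [le_div_iff₀ (by positivity)]
  linarith

theorem exists_natDegree_le_abs_sub_le {u : ℝ → ℝ} {n : ℕ} {e f M : ℝ} (hef : e ≤ f)
    (hu : ContDiffOn ℝ (n + 1 : ℕ) u (Icc e f))
    (hM : ∀ y ∈ Icc e f, |iteratedDerivWithin (n + 1) u (Icc e f) y| ≤ M) :
    ∃ T : ℝ[X], T.natDegree ≤ n ∧ ∀ t ∈ Icc e f, |u t - T.eval t| ≤ M * (f - e) ^ (n + 1) := by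
  refine ⟨∑ k ∈ Finset.range (n + 1),
    C (iteratedDerivWithin k u (Icc e f) e / k.factorial) * (X - C e) ^ k, ?_, fun t ht => ?_⟩
  · refine natDegree_sum_le_of_forall_le _ _ fun k hk => (natDegree_C_mul_le _ _).trans ?_
    exact natDegree_pow_le_of_le _ (natDegree_X_sub_C_le _) |>.trans
      (by simpa using Nat.lt_succ_iff.mp (Finset.mem_range.mp hk))
  have htaylor := taylor_mean_remainder_bound hef (by exact_mod_cast hu) ht hM
  have heval : (∑ k ∈ Finset.range (n + 1), C (iteratedDerivWithin k u (Icc e f) e /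
      k.factorial) * (X - C e) ^ k).eval t = taylorWithinEval u n (Icc e f) e t := by
    simp only [taylor_within_apply, eval_finsetSum, eval_mul, eval_C, eval_pow, eval_sub, eval_X,
      smul_eq_mul]
    exact Finset.sum_congr rfl fun k _ => by ring
  have hM0 : 0 ≤ M := (abs_nonneg _).trans (hM e ⟨le_rfl, hef⟩)
  rw [heval, ← Real.norm_eq_abs]
  calc _ ≤ M * (t - e) ^ (n + 1) / n.factorial := htaylor
    _ ≤ M * (t - e) ^ (n + 1) :=
        div_le_self (by have := ht.1; positivity) (by exact_mod_cast n.factorial_pos)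
    _ ≤ M * (f - e) ^ (n + 1) := by gcongr <;> linarith [ht.1, ht.2]

theorem iteratedDerivWithin_eq_of_subset {u : ℝ → ℝ} {n : ℕ} {s t : Set ℝ} {y : ℝ}
    (hst : s ⊆ t) (hs : UniqueDiffOn ℝ s) (ht : UniqueDiffOn ℝ t) (hu : ContDiffOn ℝ n u t)
    (hy : y ∈ s) : iteratedDerivWithin n u s y = iteratedDerivWithin n u t y := by
  simp only [iteratedDerivWithin_eq_iteratedFDerivWithin,
    iteratedFDerivWithin_subset hst hs ht hu hy]

theorem exists_natDegree_le_abs_sub_le_of_subset {u : ℝ → ℝ} {n : ℕ} {a b e f M : ℝ}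
    (hab : a < b) (hef : e < f) (hsub : Icc e f ⊆ Icc a b)
    (hu : ContDiffOn ℝ (n + 1 : ℕ) u (Icc a b))
    (hM : ∀ y ∈ Icc a b, |iteratedDerivWithin (n + 1) u (Icc a b) y| ≤ M) :
    ∃ T : ℝ[X], T.natDegree ≤ n ∧ ∀ t ∈ Icc e f, |u t - T.eval t| ≤ M * (f - e) ^ (n + 1) := by
  refine exists_natDegree_le_abs_sub_le hef.le (hu.mono hsub) fun y hy => ?_
  rw [iteratedDerivWithin_eq_of_subset hsub (uniqueDiffOn_Icc hef) (uniqueDiffOn_Icc hab) hu hy]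
  exact hM y (hsub hy)

theorem Real.sqrt_sum_sq_le {ι : Type*} {s : Finset ι} {f : ι → ℝ} {A : ℝ} (hA : 0 ≤ A)
    (hf : ∀ i ∈ s, |f i| ≤ A) : √(∑ i ∈ s, f i ^ 2) ≤ √(s.card) * A := by
  have hsum : ∑ i ∈ s, f i ^ 2 ≤ s.card * A ^ 2 := by
    simpa using Finset.sum_le_card_nsmul s _ _ fun i hi =>
      sq_le_sq' (abs_le.mp (hf i hi)).1 (abs_le.mp (hf i hi)).2
  calc √(∑ i ∈ s, f i ^ 2) ≤ √(s.card * A ^ 2) := Real.sqrt_le_sqrt hsum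
    _ = √(s.card) * A := by rw [Real.sqrt_mul (Nat.cast_nonneg _), Real.sqrt_sq hA]

theorem abs_iteratedDerivWithin_le_semiWinf {p : ℕ} {a b t : ℝ} {u : ℝ → ℝ} (hab : a < b)
    (hu : ContDiffOn ℝ (p + 1 : ℕ) u (Icc a b)) (ht : t ∈ Icc a b) :
    |iteratedDerivWithin (p + 1) u (Icc a b) t| ≤ semiWinf p a b u := by
  have hcont : ContinuousOn (fun t => |iteratedDerivWithin (p + 1) u (Icc a b) t|) (Icc a b) :=
    (hu.continuousOn_iteratedDerivWithin le_rfl (uniqueDiffOn_Icc hab)).abs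
  exact le_csSup (isCompact_Icc.image_of_continuousOn hcont).bddAbove ⟨t, ht, rfl⟩

section Partition

variable {N : ℕ} {x : ℕ → ℝ}

theorem meshHmin_le_sub {i : ℕ} (hi : i ≤ N) : meshHmin N x ≤ x (i + 1) - x i :=
  Finset.inf'_le _ (Finset.mem_range.mpr (Nat.lt_succ_of_le hi))

theorem sub_le_meshH {i : ℕ} (hi : i ≤ N) : x (i + 1) - x i ≤ meshH N x :=
  Finset.le_sup' (fun i => x (i + 1) - x i) (Finset.mem_range.mpr (Nat.lt_succ_of_le hi))

theorem meshHmin_le_meshH : meshHmin N x ≤ meshH N x :=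
  (meshHmin_le_sub N.zero_le).trans (sub_le_meshH N.zero_le)

theorem meshHmin_pos (hx : ∀ i ≤ N, x i < x (i + 1)) : 0 < meshHmin N x :=
  (Finset.lt_inf'_iff _).mpr fun i hi =>
    sub_pos.mpr (hx i (Nat.lt_succ_iff.mp (Finset.mem_range.mp hi)))

theorem strictMonoOn_Iic_of_partition (hx : ∀ i ≤ N, x i < x (i + 1)) :
    StrictMonoOn x (Iic (N + 1)) :=
  strictMonoOn_Iic_of_lt_succ fun m hm => by simpa using hx m (Nat.lt_succ_iff.mp hm)

theorem left_lt_right_of_partition (hx : ∀ i ≤ N, x i < x (i + 1)) : x 0 < x (N + 1) :=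
  strictMonoOn_Iic_of_partition hx (mem_Iic.mpr (N + 1).zero_le) (mem_Iic.mpr le_rfl) N.succ_pos

theorem Icc_subset_Icc_of_partition (hx : ∀ i ≤ N, x i < x (i + 1)) {i j : ℕ} (hij : i ≤ j)
    (hj : j ≤ N + 1) : Icc (x i) (x j) ⊆ Icc (x 0) (x (N + 1)) :=
  have hmono := (strictMonoOn_Iic_of_partition hx).monotoneOn
  Icc_subset_Icc (hmono (mem_Iic.mpr (N + 1).zero_le) (mem_Iic.mpr (hij.trans hj)) i.zero_le)
    (hmono hj (mem_Iic.mpr le_rfl) hj)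

theorem abs_sub_eval_le_distLinf (hx : ∀ i ≤ N, x i < x (i + 1)) {P : ℕ → ℝ[X]} {u : ℝ → ℝ}
    (hu : ContinuousOn u (Icc (x 0) (x (N + 1)))) {i : ℕ} (hi : i ≤ N) {t : ℝ}
    (ht : t ∈ Icc (x i) (x (i + 1))) : |u t - (P i).eval t| ≤ distLinf N x P u := by
  have hcont : ContinuousOn (fun t => |u t - (P i).eval t|) (Icc (x i) (x (i + 1))) :=
    ((hu.mono (Icc_subset_Icc_of_partition hx i.le_succ (by omega))).sub
      (P i).continuous.continuousOn).abs
  exact (le_csSup (isCompact_Icc.image_of_continuousOn hcont).bddAbove ⟨t, ht, rfl⟩).trans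
    (Finset.le_sup' (fun i => sSup ((fun t => |u t - (P i).eval t|) '' Icc (x i) (x (i + 1))))
      (Finset.mem_range.mpr (Nat.lt_succ_of_le hi)))

end Partition

theorem abs_jumpD_le {P : ℕ → ℝ[X]} {x : ℕ → ℝ} {T : ℝ[X]} {i k p : ℕ} {δ B : ℝ}
    (hPi : (P i).natDegree ≤ p) (hPi' : (P (i - 1)).natDegree ≤ p) (hT : T.natDegree ≤ p)
    (hk : k ≤ p) (hδ : 0 < δ)
    (hright : ∀ t ∈ Icc (x i) (x i + δ), |(P i).eval t - T.eval t| ≤ B)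
    (hleft : ∀ t ∈ Icc (x i - δ) (x i), |(P (i - 1)).eval t - T.eval t| ≤ B) :
    |jumpD P x i k| ≤ 2 * markovConst p * B / δ ^ k := by
  have hdeg : ∀ {Q : ℝ[X]}, Q.natDegree ≤ p → (Q - T).natDegree ≤ p := fun hQ =>
    (natDegree_sub_le _ _).trans (max_le hQ hT)
  have hr := abs_iterate_derivative_eval_le (hdeg hPi) hk hδ.ne' (x₀ := x i) (B := B)
    fun t ht => by
      rw [eval_sub]; exact hright t (by rwa [uIcc_of_le (by linarith)] at ht)
  have hl := abs_iterate_derivative_eval_le (hdeg hPi') hk (neg_ne_zero.mpr hδ.ne') (x₀ := x i)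
    (B := B) fun t ht => by
      rw [eval_sub]; exact hleft t (by rwa [← sub_eq_add_neg, uIcc_of_ge (by linarith)] at ht)
  rw [abs_neg, abs_of_pos hδ, iterate_derivative_sub, eval_sub] at hl
  rw [abs_of_pos hδ, iterate_derivative_sub, eval_sub] at hr
  calc |jumpD P x i k| ≤ |(derivative^[k] (P i)).eval (x i) - (derivative^[k] T).eval (x i)| +
        |(derivative^[k] (P (i - 1))).eval (x i) - (derivative^[k] T).eval (x i)| := by
        rw [jumpD, abs_sub_comm ((derivative^[k] (P (i - 1))).eval (x i))]
        exact abs_sub_le _ _ _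
    _ ≤ markovConst p * B / δ ^ k + markovConst p * B / δ ^ k := add_le_add hr hl
    _ = 2 * markovConst p * B / δ ^ k := by ring

theorem abs_jumpD_le_of_le_meshHmin {N p i k : ℕ} {x : ℕ → ℝ} {P : ℕ → ℝ[X]} {u : ℝ → ℝ}
    {δ : ℝ} (hx : ∀ i ≤ N, x i < x (i + 1)) (hP : ∀ i ≤ N, (P i).natDegree ≤ p)
    (hu : ContDiffOn ℝ (p + 1 : ℕ) u (Icc (x 0) (x (N + 1))))
    (hi1 : 1 ≤ i) (hiN : i ≤ N) (hk : k ≤ p) (hδ : 0 < δ) (hδm : δ ≤ meshHmin N x) :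
    |jumpD P x i k| ≤ 2 * markovConst p *
      (distLinf N x P u + semiWinf p (x 0) (x (N + 1)) u * (2 * δ) ^ (p + 1)) / δ ^ k := by
  obtain ⟨j, rfl⟩ : ∃ j, i = j + 1 := ⟨i - 1, by omega⟩
  have hleft : meshHmin N x ≤ x (j + 1) - x j := meshHmin_le_sub (by omega)
  have hright : meshHmin N x ≤ x (j + 2) - x (j + 1) := meshHmin_le_sub hiN
  have hab := left_lt_right_of_partition hx
  obtain ⟨T, hT, hTu⟩ := exists_natDegree_le_abs_sub_le_of_subset hab
    (e := x (j + 1) - δ) (f := x (j + 1) + δ) (by linarith)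
    ((Icc_subset_Icc (by linarith) (by linarith)).trans
      (Icc_subset_Icc_of_partition hx (j.le_add_right 2) (by omega))) hu
    fun y hy => abs_iteratedDerivWithin_le_semiWinf hab hu hy
  rw [show x (j + 1) + δ - (x (j + 1) - δ) = 2 * δ by ring] at hTu
  have hE : ∀ i ≤ N, ∀ t ∈ Icc (x i) (x (i + 1)), |u t - (P i).eval t| ≤ distLinf N x P u :=
    fun i hi t ht => abs_sub_eval_le_distLinf hx hu.continuousOn hi ht
  refine abs_jumpD_le (hP _ hiN) (hP _ (by omega)) hT hk hδ (fun t ht => ?_) (fun t ht => ?_)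
  · calc |(P (j + 1)).eval t - T.eval t| ≤ |(P (j + 1)).eval t - u t| + |u t - T.eval t| :=
          abs_sub_le _ _ _
      _ ≤ _ := add_le_add (by rw [abs_sub_comm]; exact hE _ hiN t ⟨ht.1, by linarith [ht.2]⟩)
          (hTu t ⟨by linarith [ht.1], ht.2⟩)
  · rw [Nat.add_sub_cancel]
    calc |(P j).eval t - T.eval t| ≤ |(P j).eval t - u t| + |u t - T.eval t| :=
          abs_sub_le _ _ _
      _ ≤ _ := add_le_add
          (by rw [abs_sub_comm]; exact hE j (by omega) t ⟨by linarith [ht.1], ht.2⟩)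
          (hTu t ⟨ht.1, by linarith [ht.2]⟩)

theorem abs_scaled_jumpD_le {N p i k : ℕ} {x : ℕ → ℝ} {P : ℕ → ℝ[X]} {u : ℝ → ℝ} {μ : ℝ}
    (hx : ∀ i ≤ N, x i < x (i + 1)) (hP : ∀ i ≤ N, (P i).natDegree ≤ p)
    (hu : ContDiffOn ℝ (p + 1 : ℕ) u (Icc (x 0) (x (N + 1))))
    (hi1 : 1 ≤ i) (hiN : i ≤ N) (hk : k ≤ p) (hμ : 1 ≤ μ) :
    |jumpD P x i k * meshHmin N x ^ k / meshH N x ^ (p + 1)| ≤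
      2 * markovConst p * μ ^ p * distLinf N x P u / meshH N x ^ (p + 1) +
        2 ^ (p + 2) * markovConst p * semiWinf p (x 0) (x (N + 1)) u / μ := by
  set m := meshHmin N x
  set h := meshH N x
  set E := distLinf N x P u
  set M := semiWinf p (x 0) (x (N + 1)) u
  set c := markovConst p
  have hm : 0 < m := meshHmin_pos hx
  have hmh : m ≤ h := meshHmin_le_meshH
  have hh : 0 < h := hm.trans_le hmh
  have hμ0 : 0 < μ := by linarith
  have hE : 0 ≤ E := (abs_nonneg _).trans
    (abs_sub_eval_le_distLinf hx hu.continuousOn N.zero_le ⟨le_rfl, (hx 0 N.zero_le).le⟩)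
  have hab := left_lt_right_of_partition hx
  have hM : 0 ≤ M := (abs_nonneg _).trans
    (abs_iteratedDerivWithin_le_semiWinf hab hu (left_mem_Icc.mpr hab.le))
  have hJ := abs_jumpD_le_of_le_meshHmin hx hP hu hi1 hiN hk (div_pos hm hμ0)
    (div_le_self hm.le hμ)
  have hμk : μ ^ k / μ ^ (p + 1) ≤ 1 / μ := by
    rw [div_le_div_iff₀ (by positivity) hμ0, one_mul, pow_succ]
    exact mul_le_mul_of_nonneg_right (pow_le_pow_right₀ hμ hk) hμ0.le
  have hmh' : (m / h) ^ (p + 1) ≤ 1 := pow_le_one₀ (by positivity) (div_le_one_of_le₀ hmh hh.le)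
  calc |jumpD P x i k * m ^ k / h ^ (p + 1)| = |jumpD P x i k| * m ^ k / h ^ (p + 1) := by
        rw [abs_div, abs_mul, abs_of_pos (pow_pos hm k), abs_of_pos (pow_pos hh _)]
    _ ≤ 2 * c * (E + M * (2 * (m / μ)) ^ (p + 1)) / (m / μ) ^ k * m ^ k / h ^ (p + 1) := by
        gcongr
    _ = 2 * c * μ ^ k * E / h ^ (p + 1) +
          2 ^ (p + 2) * c * M * (μ ^ k / μ ^ (p + 1)) * (m / h) ^ (p + 1) := by
        simp only [div_pow, mul_pow]
        field_simp
        ring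
    _ ≤ 2 * c * μ ^ p * E / h ^ (p + 1) + 2 ^ (p + 2) * c * M * (1 / μ) * 1 := by
        have hc : 0 ≤ c := zero_le_one.trans (one_le_markovConst p)
        gcongr 2 * c * ?_ * E / _ + _ * ?_ * ?_
        exact pow_le_pow_right₀ hμ hk
    _ = 2 * c * μ ^ p * E / h ^ (p + 1) + 2 ^ (p + 2) * c * M / μ := by ring

/-- The jumps at `x_i` are estimated on `[x_i - δ, x_i + δ]` with `δ = h_min / jumpRadiusDivisor p`;
this divisor makes the Taylor remainder contribute exactly `|u|_{W^{p+1}_∞}` to `‖D̃_i‖`. -/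
def jumpRadiusDivisor (p : ℕ) : ℝ := 2 ^ (p + 2) * √(p + 1) * markovConst p

def jumpConst (p : ℕ) : ℝ := 2 * √(p + 1) * markovConst p * jumpRadiusDivisor p ^ p

theorem one_le_jumpRadiusDivisor (p : ℕ) : 1 ≤ jumpRadiusDivisor p :=
  one_le_mul_of_one_le_of_one_le (one_le_mul_of_one_le_of_one_le (one_le_pow₀ one_le_two)
    (Real.one_le_sqrt.mpr (by linarith [(p.cast_nonneg : (0 : ℝ) ≤ p)]))) (one_le_markovConst p)

theorem jumpConst_pos (p : ℕ) : 0 < jumpConst p := by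
  have := one_le_markovConst p
  have := one_le_jumpRadiusDivisor p
  unfold jumpConst
  positivity

theorem normDTilde_le {N p i : ℕ} {x : ℕ → ℝ} {P : ℕ → ℝ[X]} {u : ℝ → ℝ}
    (hx : ∀ i ≤ N, x i < x (i + 1)) (hP : ∀ i ≤ N, (P i).natDegree ≤ p)
    (hu : ContDiffOn ℝ (p + 1 : ℕ) u (Icc (x 0) (x (N + 1)))) (hi1 : 1 ≤ i) (hiN : i ≤ N) :
    normDTilde p N x P i ≤ jumpConst p * distLinf N x P u / meshH N x ^ (p + 1) +
      semiWinf p (x 0) (x (N + 1)) u := by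
  have hμ := one_le_jumpRadiusDivisor p
  refine (Real.sqrt_sum_sq_le ?_ fun k hk => abs_scaled_jumpD_le hx hP hu hi1 hiN
    (Nat.lt_succ_iff.mp (Finset.mem_range.mp hk)) hμ).trans_eq ?_
  · exact (abs_nonneg _).trans (abs_scaled_jumpD_le hx hP hu hi1 hiN (Nat.zero_le p) hμ)
  · have hc := one_le_markovConst p
    have hM : √(p + 1) * (2 ^ (p + 2) * markovConst p * semiWinf p (x 0) (x (N + 1)) u /
        jumpRadiusDivisor p) = semiWinf p (x 0) (x (N + 1)) u := by
      unfold jumpRadiusDivisor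
      field_simp
    rw [Finset.card_range, Nat.cast_succ, mul_add, hM, jumpConst]
    ring

/-- Theorem 2.5 in 1-D: lower bound for the `L^∞` error in terms of scaled jumps. -/
theorem linf_error_lower_bound (p : ℕ) :
    ∃ C : ℝ, 0 < C ∧
      ∀ (N : ℕ) (hN : 1 ≤ N), ∀ (a b : ℝ), a < b →
      ∀ (x : ℕ → ℝ), x 0 = a → x (N + 1) = b → (∀ i ≤ N, x i < x (i + 1)) →
      ∀ (P : ℕ → Polynomial ℝ), (∀ i ≤ N, (P i).natDegree ≤ p) →
      ∀ (u : ℝ → ℝ), ContDiffOn ℝ (p + 1 : ℕ) u (Set.Icc a b) →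
      distLinf N x P u ≥
        C * meshH N x ^ (p + 1) *
          (Real.sqrt (meshHmin N x / meshH N x) *
              (Finset.Icc 1 N).sup' (Finset.nonempty_Icc.mpr hN)
                (fun i => normDTilde p N x P i)
            - semiWinf p a b u) := by
  refine ⟨(jumpConst p)⁻¹, inv_pos.mpr (jumpConst_pos p), ?_⟩
  intro N hN a b _ x rfl rfl hx P hP u hu
  set S := (Finset.Icc 1 N).sup' (Finset.nonempty_Icc.mpr hN) fun i => normDTilde p N x P i
  have hS : S ≤ jumpConst p * distLinf N x P u / meshH N x ^ (p + 1) +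
      semiWinf p (x 0) (x (N + 1)) u := Finset.sup'_le _ _ fun i hi =>
    normDTilde_le hx hP hu (Finset.mem_Icc.mp hi).1 (Finset.mem_Icc.mp hi).2
  have hS0 : 0 ≤ S := (Real.sqrt_nonneg _).trans
    (Finset.le_sup' (fun i => normDTilde p N x P i) (Finset.mem_Icc.mpr ⟨le_rfl, hN⟩))
  have hh : 0 < meshH N x := (meshHmin_pos hx).trans_le meshHmin_le_meshH
  have hratio : √(meshHmin N x / meshH N x) ≤ 1 :=
    Real.sqrt_le_one.mpr (div_le_one_of_le₀ meshHmin_le_meshH hh.le)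
  have hK := jumpConst_pos p
  calc (jumpConst p)⁻¹ * meshH N x ^ (p + 1) *
        (√(meshHmin N x / meshH N x) * S - semiWinf p (x 0) (x (N + 1)) u)
      ≤ (jumpConst p)⁻¹ * meshH N x ^ (p + 1) *
        (jumpConst p * distLinf N x P u / meshH N x ^ (p + 1)) := by
        gcongr
        nlinarith
    _ = distLinf N x P u := by field_simp

end
end

section
/- For all integers n ≥ 1 and p ≥ 0 there exists a constant C > 0 depending only on n and p such that for every real polynomial v in n variables of total degree at most p, every center x₀ ∈ ℝⁿ, and every radius δ > 0, one has ∫_{B(x₀,δ)} |v(x)| dx ≥ C δ^{n/2} ( ∫_{B(x₀,δ)} v(x)² dx )^{1/2}, where B(x₀,δ) is the open Euclidean ball of center x₀ and radius δ and integrals are with respect to Lebesgue measure. (This is the inverse L¹–L² estimate for polynomials of bounded degree, obtained by norm equivalence on a finite-dimensional space and scaling.) -/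
/-!
On the unit ball, `v ↦ ∫ |v|` and `v ↦ (∫ v²)^{1/2}` are norms on the finite-dimensional space of
polynomials of total degree at most `p` (the first is definite because a polynomial vanishing
almost everywhere on an open set vanishes there, hence is zero by analyticity), so they are
equivalent. That space is invariant under the affine substitution `x = x₀ + δ y` taking the unit
ball to `B(x₀, δ)`, which multiplies both integrals by `δⁿ`; as the `L²` side enters through a
square root, this produces the factor `δ^{n/2}`.
-/

open MeasureTheory Metric MvPolynomial

theorem LinearMap.exists_norm_le_mul_norm_of_injective {𝕜 M F₁ F₂ : Type*}
    [NontriviallyNormedField 𝕜] [CompleteSpace 𝕜] [AddCommGroup M] [Module 𝕜 M]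
    [FiniteDimensional 𝕜 M] [NormedAddCommGroup F₁] [NormedSpace 𝕜 F₁]
    [NormedAddCommGroup F₂] [NormedSpace 𝕜 F₂]
    (T₁ : M →ₗ[𝕜] F₁) (T₂ : M →ₗ[𝕜] F₂) (hT₁ : Function.Injective T₁) :
    ∃ C, 0 < C ∧ ∀ x, ‖T₂ x‖ ≤ C * ‖T₁ x‖ := by
  let e := LinearEquiv.ofInjective T₁ hT₁
  let S := LinearMap.toContinuousLinearMap (T₂ ∘ₗ e.symm.toLinearMap)
  refine ⟨‖S‖ + 1, by positivity, fun x => ?_⟩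
  calc ‖T₂ x‖ = ‖S (e x)‖ := by simp [S]
    _ ≤ ‖S‖ * ‖T₁ x‖ := S.le_opNorm (e x)
    _ ≤ (‖S‖ + 1) * ‖T₁ x‖ := by gcongr; linarith

theorem Continuous.memLp_restrict_of_isCompact {X E : Type*} [TopologicalSpace X]
    [MeasurableSpace X] [OpensMeasurableSpace X] [T2Space X] [NormedAddCommGroup E]
    {μ : Measure X} [IsFiniteMeasureOnCompacts μ] {f : X → E} (hf : Continuous f)
    {K : Set X} (hK : IsCompact K) (q : ENNReal) : MemLp f q (μ.restrict K) := by
  have := (isFiniteMeasure_restrict (μ := μ)).2 hK.measure_lt_top.ne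
  obtain ⟨M, hM⟩ := hK.exists_bound_of_continuousOn hf.continuousOn
  refine .of_bound (hf.continuousOn.aestronglyMeasurable_of_isCompact hK hK.measurableSet) M ?_
  filter_upwards [ae_restrict_mem hK.measurableSet] using hM

section
variable {α E 𝕜 M : Type*} {m : MeasurableSpace α} {μ : Measure α} {q : ENNReal}
  [NormedAddCommGroup E] [NormedRing 𝕜] [Module 𝕜 E] [IsBoundedSMul 𝕜 E]
  [AddCommMonoid M] [Module 𝕜 M]

def LinearMap.toLp (L : M →ₗ[𝕜] α → E) (hL : ∀ v, MemLp (L v) q μ) : M →ₗ[𝕜] Lp E q μ where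
  toFun v := (hL v).toLp _
  map_add' v w := by
    rw [← MemLp.toLp_add]
    exact MemLp.toLp_congr _ _ (by rw [map_add])
  map_smul' c v := by
    rw [RingHom.id_apply, ← MemLp.toLp_const_smul]
    exact MemLp.toLp_congr _ _ (by rw [map_smul])

@[simp] lemma LinearMap.toLp_apply (L : M →ₗ[𝕜] α → E) (hL : ∀ v, MemLp (L v) q μ) (v : M) :
    L.toLp hL v = (hL v).toLp _ := rfl

end

lemma MemLp.norm_toLp_one {α E : Type*} {m : MeasurableSpace α} {μ : Measure α}
    [NormedAddCommGroup E] {f : α → E} (hf : MemLp f 1 μ) :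
    ‖hf.toLp f‖ = ∫ a, ‖f a‖ ∂μ :=
  L1.norm_of_fun_eq_integral_norm (memLp_one_iff_integrable.1 hf)

lemma MemLp.norm_toLp_two {α : Type*} {m : MeasurableSpace α} {μ : Measure α}
    {f : α → ℝ} (hf : MemLp f 2 μ) :
    ‖hf.toLp f‖ = √(∫ a, f a ^ 2 ∂μ) := by
  rw [← Real.sqrt_sq (norm_nonneg _), ← real_inner_self_eq_norm_sq, L2.inner_def]
  congr 1
  refine integral_congr_ae ?_
  filter_upwards [hf.coeFn_toLp] with a ha
  simp [ha, sq]

theorem setIntegral_ball_eq_pow_mul_setIntegral_unitBall {E F : Type*} [NormedAddCommGroup E]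
    [NormedSpace ℝ E] [FiniteDimensional ℝ E] [MeasurableSpace E] [BorelSpace E]
    [NormedAddCommGroup F] [NormedSpace ℝ F]
    (μ : Measure E) [μ.IsAddHaarMeasure] (f : E → F) (x₀ : E) {δ : ℝ} (hδ : 0 < δ) :
    ∫ x in ball x₀ δ, f x ∂μ = δ ^ Module.finrank ℝ E • ∫ y in ball 0 1, f (x₀ + δ • y) ∂μ := by
  rw [Measure.setIntegral_comp_smul_of_pos μ (fun z => f (x₀ + z)) _ hδ, smul_unitBall_of_pos hδ,
    smul_inv_smul₀ (pow_ne_zero _ hδ.ne'),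
    ← (measurePreserving_add_left μ x₀).setIntegral_preimage_emb (measurableEmbedding_addLeft x₀),
    preimage_add_ball, sub_self]

namespace MvPolynomial

theorem eq_zero_of_eval_eq_zero_on_isOpen {𝕜 σ : Type*} [RCLike 𝕜] [Fintype σ]
    {U : Set (σ → 𝕜)} (hU : IsOpen U) (hne : U.Nonempty) {v : MvPolynomial σ 𝕜}
    (h : ∀ x ∈ U, eval x v = 0) : v = 0 := by
  obtain ⟨x, hx⟩ := hne
  have : (eval · v) = 0 := (AnalyticOnNhd.eval_mvPolynomial v).eq_of_eventuallyEq
    analyticOnNhd_const (Filter.eventually_of_mem (hU.mem_nhds hx) h)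
  exact funext fun y => by simpa using congrFun this y

theorem totalDegree_bind₁_le {R σ τ : Type*} [CommSemiring R]
    {f : σ → MvPolynomial τ R} {d : ℕ} (hf : ∀ i, (f i).totalDegree ≤ d) (v : MvPolynomial σ R) :
    (bind₁ f v).totalDegree ≤ d * v.totalDegree := by
  conv_lhs => rw [v.as_sum, map_sum]
  refine totalDegree_finsetSum_le fun m hm => ?_
  rw [bind₁_monomial]
  refine (totalDegree_mul _ _).trans ?_
  rw [totalDegree_C, zero_add]
  refine (totalDegree_finsetProd _ _).trans ?_
  calc ∑ i ∈ m.support, (f i ^ m i).totalDegree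
      ≤ ∑ i ∈ m.support, d * m i :=
        Finset.sum_le_sum fun i _ =>
          (totalDegree_pow _ _).trans (by rw [mul_comm]; gcongr; exact hf i)
    _ = d * m.degree := by rw [← Finset.mul_sum]; rfl
    _ ≤ d * v.totalDegree := by gcongr; exact le_totalDegree hm

theorem totalDegree_C_add_C_mul_X_le {R σ : Type*} [CommSemiring R] (a c : R)
    (i : σ) :
    (C a + C c * X i : MvPolynomial σ R).totalDegree ≤ 1 :=
  (totalDegree_add _ _).trans <| max_le (by simp) <| by
    rw [C_mul_X_eq_monomial]
    exact (totalDegree_monomial_le _ _).trans (by simp)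

theorem eval_bind₁_C_add_C_mul_X {R σ : Type*} [CommSemiring R] (a : σ → R) (c : R)
    (y : σ → R) (v : MvPolynomial σ R) :
    eval y (bind₁ (fun i => C (a i) + C c * X i) v) = eval (a + c • y) v := by
  refine (eval₂Hom_bind₁ (RingHom.id R) y _ v).trans ?_
  congr 2
  funext i
  simp [mul_comm]

variable {σ : Type*}

variable (σ) in
noncomputable def evalEuclideanₗ : MvPolynomial σ ℝ →ₗ[ℝ] EuclideanSpace ℝ σ → ℝ :=
  LinearMap.pi fun x => (aeval fun i => x i).toLinearMap

@[simp] lemma evalEuclideanₗ_apply (v : MvPolynomial σ ℝ) (x : EuclideanSpace ℝ σ) :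
    evalEuclideanₗ σ v x = eval (fun i => x i) v := by
  simp [evalEuclideanₗ]

lemma continuous_eval_euclidean (v : MvPolynomial σ ℝ) :
    Continuous fun x : EuclideanSpace ℝ σ => eval (fun i => x i) v :=
  (continuous_eval v).comp (PiLp.continuous_ofLp 2 _)

variable [Fintype σ]

theorem eq_zero_of_eval_euclidean_ae_eq_zero {U : Set (EuclideanSpace ℝ σ)} (hU : IsOpen U)
    (hne : U.Nonempty) {v : MvPolynomial σ ℝ}
    (h : (fun x : EuclideanSpace ℝ σ => eval (fun i => x i) v) =ᵐ[volume.restrict U] 0) :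
    v = 0 := by
  have hzero := Measure.eqOn_open_of_ae_eq h hU (continuous_eval_euclidean v).continuousOn
    continuousOn_const
  exact eq_zero_of_eval_eq_zero_on_isOpen (hU.preimage (PiLp.continuous_toLp 2 _))
    (hne.preimage (WithLp.toLp_surjective 2)) fun y hy => hzero hy

theorem exists_sqrt_integral_sq_le_mul_integral_abs (p : ℕ) {U : Set (EuclideanSpace ℝ σ)}
    (hU : IsOpen U) (hUb : Bornology.IsBounded U) (hne : U.Nonempty) :
    ∃ C, 0 < C ∧ ∀ v : MvPolynomial σ ℝ, v.totalDegree ≤ p →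
      √(∫ x in U, eval (fun i => x i) v ^ 2) ≤ C * ∫ x in U, |eval (fun i => x i) v| := by
  let L := evalEuclideanₗ σ ∘ₗ (restrictTotalDegree σ ℝ p).subtype
  have hL (q) (v) : MemLp (L v) q (volume.restrict U) :=
    ((continuous_eval_euclidean _).memLp_restrict_of_isCompact hUb.isCompact_closure q).mono_measure
      (Measure.restrict_mono subset_closure le_rfl)
  have hinj : Function.Injective (L.toLp (hL 1)) := by
    refine (injective_iff_map_eq_zero _).2 fun v hv => Subtype.ext ?_
    refine eq_zero_of_eval_euclidean_ae_eq_zero hU hne ?_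
    rw [LinearMap.toLp_apply, Lp.eq_zero_iff_ae_eq_zero] at hv
    filter_upwards [(hL 1 v).coeFn_toLp, hv] with x hx hv
    simpa [L] using hx.symm.trans hv
  obtain ⟨C, hC, hle⟩ := LinearMap.exists_norm_le_mul_norm_of_injective _ (L.toLp (hL 2)) hinj
  refine ⟨C, hC, fun v hv => ?_⟩
  have := hle ⟨v, (mem_restrictTotalDegree _ _ _).2 hv⟩
  rw [LinearMap.toLp_apply, LinearMap.toLp_apply, MemLp.norm_toLp_one, MemLp.norm_toLp_two] at this
  simpa [L] using this

end MvPolynomial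

theorem inverse_l1_l2_estimate_polynomials_general (n p : ℕ) :
    ∃ C : ℝ, 0 < C ∧
      ∀ (v : MvPolynomial (Fin n) ℝ), v.totalDegree ≤ p →
      ∀ (x₀ : EuclideanSpace ℝ (Fin n)) (δ : ℝ), 0 < δ →
      (∫ x in Metric.ball x₀ δ, |MvPolynomial.eval (fun i => x i) v|) ≥
        C * δ ^ ((n : ℝ) / 2) *
          Real.sqrt (∫ x in Metric.ball x₀ δ, (MvPolynomial.eval (fun i => x i) v) ^ 2) := by
  obtain ⟨K, hK, hunit⟩ := exists_sqrt_integral_sq_le_mul_integral_abs p isOpen_ball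
    isBounded_ball (nonempty_ball.2 one_pos : (ball (0 : EuclideanSpace ℝ (Fin n)) 1).Nonempty)
  refine ⟨K⁻¹, inv_pos.2 hK, fun v hv x₀ δ hδ => ?_⟩
  let w := bind₁ (fun i => C (x₀ i) + C δ * X i) v
  have hw (y : EuclideanSpace ℝ (Fin n)) :
      eval (fun i => (x₀ + δ • y) i) v = eval (fun i => y i) w := by
    rw [eval_bind₁_C_add_C_mul_X (fun i => x₀ i) δ (fun i => y i) v]
    congr 1
  have hdeg : w.totalDegree ≤ p :=
    (totalDegree_bind₁_le (fun i => totalDegree_C_add_C_mul_X_le (x₀ i) δ i) v).trans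
      (by rwa [one_mul])
  have hpow : δ ^ ((n : ℝ) / 2) * δ ^ ((n : ℝ) / 2) = δ ^ n := by
    rw [← Real.rpow_add hδ, add_halves, Real.rpow_natCast]
  have hsqrt : √(δ ^ n) = δ ^ ((n : ℝ) / 2) := by
    rw [← hpow, Real.sqrt_mul_self (by positivity)]
  simp only [setIntegral_ball_eq_pow_mul_setIntegral_unitBall volume _ x₀ hδ,
    finrank_euclideanSpace_fin, smul_eq_mul, hw]
  rw [Real.sqrt_mul (by positivity), hsqrt]
  set A := ∫ y in ball (0 : EuclideanSpace ℝ (Fin n)) 1, |eval (fun i => y i) w|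
  set B := ∫ y in ball (0 : EuclideanSpace ℝ (Fin n)) 1, eval (fun i => y i) w ^ 2
  calc K⁻¹ * δ ^ ((n : ℝ) / 2) * (δ ^ ((n : ℝ) / 2) * √B) = K⁻¹ * δ ^ n * √B := by
        rw [← hpow]; ring
    _ ≤ K⁻¹ * δ ^ n * (K * A) := by gcongr; exact hunit w hdeg
    _ = δ ^ n * A := by field_simp

/-- Inverse `L¹`–`L²` estimate for polynomials of total degree at most `p` on Euclidean
balls: `∫_B |v| ≥ C δ^{n/2} (∫_B v²)^{1/2}` with `C` depending only on `n` and `p`. -/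
theorem inverse_l1_l2_estimate_polynomials (n p : ℕ) (hn : 1 ≤ n) :
    ∃ C : ℝ, 0 < C ∧
      ∀ (v : MvPolynomial (Fin n) ℝ), v.totalDegree ≤ p →
      ∀ (x₀ : EuclideanSpace ℝ (Fin n)) (δ : ℝ), 0 < δ →
      (∫ x in Metric.ball x₀ δ, |MvPolynomial.eval (fun i => x i) v|) ≥
        C * δ ^ ((n : ℝ) / 2) *
          Real.sqrt (∫ x in Metric.ball x₀ δ, (MvPolynomial.eval (fun i => x i) v) ^ 2) :=
  inverse_l1_l2_estimate_polynomials_general n p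
end
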